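/- arXiv:2103.03812 — 4 statements merged into one kernel-verified Lean document; each statement's English description precedes it below -/
import Mathlib

section
/- For every T > 0 and every x ∈ (0,1) there exists a constant C > 0 such that for all t ∈ (0,T] and all 0 < ε < t, ∫_{t−ε}^{t} ∫_0^1 H_{t−s}(x,y)² dy ds ≥ C √ε. -/
open MeasureTheory Real

/-- The Dirichlet heat kernel on `[0,1]`:
`H t x y = (4πt)^{-1/2} Σ_{n∈ℤ} [exp(-(y-x-2n)²/(4t)) - exp(-(y+x-2n)²/(4t))]`. -/
noncomputable def dirichletHeatKernel (t x y : ℝ) : ℝ :=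
  (Real.sqrt (4 * π * t))⁻¹ *
    ∑' n : ℤ, (Real.exp (-((y - x - 2 * (n : ℝ)) ^ 2) / (4 * t)) -
      Real.exp (-((y + x - 2 * (n : ℝ)) ^ 2) / (4 * t)))

set_option maxHeartbeats 1000000


lemma natAbs_neg_add_one (n : ℕ) : ((-((n:ℤ) + 1))).natAbs = n + 1 := by omega

lemma summable_pow_natAbs {r : ℝ} (h0 : 0 ≤ r) (h1 : r < 1) :
    Summable (fun n : ℤ => r ^ n.natAbs) := by
  apply Summable.of_nat_of_neg
  · simpa using summable_geometric_of_lt_one h0 h1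
  · have : (fun n : ℕ => r ^ ((-(n:ℤ)).natAbs)) = fun n : ℕ => r ^ n := by
      funext n; congr 1; omega
    simpa [this] using summable_geometric_of_lt_one h0 h1

lemma tsum_pow_natAbs_le {r : ℝ} (h0 : 0 ≤ r) (h1 : r < 1) :
    ∑' n : ℤ, r ^ n.natAbs ≤ 2 / (1 - r) := by
  have hgeo := summable_geometric_of_lt_one h0 h1
  have hs1 : Summable (fun n : ℕ => r ^ (((n:ℤ)).natAbs)) := by simpa using hgeo
  have hs2 : Summable (fun n : ℕ => r ^ ((-((n:ℤ) + 1)).natAbs)) := by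
    refine Summable.of_nonneg_of_le (fun n => pow_nonneg h0 _) (fun n => ?_) hs1
    rw [natAbs_neg_add_one]
    simp only [Int.natAbs_natCast]
    exact pow_le_pow_of_le_one h0 h1.le (Nat.le_succ n)
  rw [tsum_of_nat_of_neg_add_one (f := fun n : ℤ => r ^ n.natAbs) hs1 hs2]
  have h1' : (0:ℝ) < 1 - r := by linarith
  have e1 : ∑' n : ℕ, r ^ (((n:ℤ)).natAbs) = (1 - r)⁻¹ := by
    simpa using tsum_geometric_of_lt_one h0 h1
  have e2 : ∑' n : ℕ, r ^ ((-((n:ℤ) + 1)).natAbs) ≤ (1 - r)⁻¹ := by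
    calc ∑' n : ℕ, r ^ ((-((n:ℤ) + 1)).natAbs) ≤ ∑' n : ℕ, r ^ (((n:ℤ)).natAbs) := by
          apply Summable.tsum_le_tsum _ hs2 hs1
          intro n
          rw [natAbs_neg_add_one]
          simp only [Int.natAbs_natCast]
          exact pow_le_pow_of_le_one h0 h1.le (Nat.le_succ n)
      _ = (1 - r)⁻¹ := e1
  rw [e1, div_eq_mul_inv]
  linarith

lemma exp_quad_le {τ m w u c : ℝ} (hτ : 0 < τ) (hcτ : c * τ ≤ 1) (hw : 0 ≤ w)
    (hu : m^2 + 4*w ≤ u^2) :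
    Real.exp (-(u^2) / (4*τ)) ≤ Real.exp (-(m^2) / (4*τ)) * Real.exp (-(c*w)) := by
  rw [← Real.exp_add]
  apply Real.exp_le_exp.2
  have h1 : c * w ≤ w / τ := by
    rw [le_div_iff₀ hτ]; nlinarith
  have key : 0 ≤ (u^2 - m^2 - 4*w)/(4*τ) :=
    div_nonneg (by linarith) (by linarith)
  have e : -(u^2)/(4*τ) + (u^2 - m^2 - 4*w)/(4*τ) = -(m^2)/(4*τ) - w/τ := by
    field_simp; ring
  linarith

lemma gauss_term_le {τ : ℝ} (hτ : 0 < τ) (a : ℝ) (n : ℤ) :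
    Real.exp (-((a - 2*(n:ℝ))^2) / (4*τ)) ≤
      Real.exp ((2*|a|+1)/(4*τ)) * Real.exp (-τ⁻¹) ^ n.natAbs := by
  rw [← Real.exp_nat_mul, ← Real.exp_add]
  apply Real.exp_le_exp.2
  have habs : 2*(n.natAbs:ℝ) - |a| ≤ |a - 2*(n:ℝ)| := by
    have h1 : |2*(n:ℝ)| - |a| ≤ |a - 2*(n:ℝ)| := by
      rw [abs_sub_comm]; exact abs_sub_abs_le_abs_sub _ _
    have h2 : |2*(n:ℝ)| = 2*(n.natAbs:ℝ) := by
      rw [abs_mul, abs_two, Nat.cast_natAbs]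
      norm_cast
    linarith
  have hsq : 4*(n.natAbs:ℝ) - 2*|a| - 1 ≤ (a - 2*(n:ℝ))^2 := by
    nlinarith [sq_abs (a - 2*(n:ℝ)), sq_nonneg (|a - 2*(n:ℝ)| - 1), abs_nonneg a]
  have key : 0 ≤ ((a - 2*(n:ℝ))^2 + 2*|a| + 1 - 4*(n.natAbs:ℝ))/(4*τ) :=
    div_nonneg (by linarith) (by linarith)
  have e : -((a - 2*(n:ℝ))^2)/(4*τ) + ((a - 2*(n:ℝ))^2 + 2*|a| + 1 - 4*(n.natAbs:ℝ))/(4*τ)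
      = (2*|a|+1)/(4*τ) + (n.natAbs:ℝ) * (-τ⁻¹) := by
    field_simp; ring
  linarith

lemma summable_pow_natAbs' {r : ℝ} (h0 : 0 ≤ r) (h1 : r < 1) :
    Summable (fun n : ℤ => r ^ n.natAbs) := by
  apply Summable.of_nat_of_neg
  · simpa using summable_geometric_of_lt_one h0 h1
  · have : (fun n : ℕ => r ^ ((-(n:ℤ)).natAbs)) = fun n : ℕ => r ^ n := by
      funext n; congr 1; omega
    simpa [this] using summable_geometric_of_lt_one h0 h1

lemma summable_gauss {τ : ℝ} (hτ : 0 < τ) (a : ℝ) :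
    Summable (fun n : ℤ => Real.exp (-((a - 2*(n:ℝ))^2) / (4*τ))) := by
  have hr0 : (0:ℝ) ≤ Real.exp (-τ⁻¹) := (Real.exp_pos _).le
  have hr1 : Real.exp (-τ⁻¹) < 1 := exp_lt_one_iff.2 (neg_lt_zero.2 (by positivity))
  exact Summable.of_nonneg_of_le (fun n => (Real.exp_pos _).le)
    (gauss_term_le hτ a) ((summable_pow_natAbs' hr0 hr1).mul_left _)

lemma tail_term_le {c : ℝ} (hc : 0 < c) (n : ℤ) :
    Real.exp (-(c * ((n.natAbs - 1 : ℕ) : ℝ)^2)) ≤ Real.exp c * Real.exp (-c) ^ n.natAbs := by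
  rw [← Real.exp_nat_mul, ← Real.exp_add]
  apply Real.exp_le_exp.2
  have hk : ((n.natAbs:ℝ)) - 1 ≤ ((n.natAbs - 1 : ℕ) : ℝ)^2 := by
    rcases n.natAbs with _ | j
    · norm_num
    · push_cast [Nat.succ_sub_one]
      rcases Nat.eq_zero_or_pos j with h | h
      · simp [h]
      · have : (1:ℝ) ≤ (j:ℝ) := by exact_mod_cast h
        nlinarith
  nlinarith [mul_le_mul_of_nonneg_left hk hc.le]

lemma summable_tail {c : ℝ} (hc : 0 < c) :
    Summable (fun n : ℤ => Real.exp (-(c * ((n.natAbs - 1 : ℕ) : ℝ)^2))) :=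
  Summable.of_nonneg_of_le (fun n => (Real.exp_pos _).le) (tail_term_le hc)
    ((summable_pow_natAbs' (Real.exp_pos _).le (exp_lt_one_iff.2 (neg_lt_zero.2 hc))).mul_left _)

lemma tsum_tail_le {c : ℝ} (hc : 0 < c) :
    ∑' n : ℤ, Real.exp (-(c * ((n.natAbs - 1 : ℕ) : ℝ)^2)) ≤ 2 * Real.exp c / (1 - Real.exp (-c)) := by
  have hr0 : (0:ℝ) ≤ Real.exp (-c) := (Real.exp_pos _).le
  have hr1 : Real.exp (-c) < 1 := exp_lt_one_iff.2 (neg_lt_zero.2 hc)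
  calc ∑' n : ℤ, Real.exp (-(c * ((n.natAbs - 1 : ℕ) : ℝ)^2))
      ≤ ∑' n : ℤ, Real.exp c * Real.exp (-c) ^ n.natAbs :=
        Summable.tsum_le_tsum (tail_term_le hc) (summable_tail hc) ((summable_pow_natAbs' hr0 hr1).mul_left _)
    _ = Real.exp c * ∑' n : ℤ, Real.exp (-c) ^ n.natAbs := tsum_mul_left
    _ ≤ Real.exp c * (2 / (1 - Real.exp (-c))) :=
        mul_le_mul_of_nonneg_left (tsum_pow_natAbs_le hr0 hr1) (Real.exp_pos _).le
    _ = 2 * Real.exp c / (1 - Real.exp (-c)) := by ring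

lemma q_geom {x m : ℝ} (hx1 : 0 < x) (hx2 : x < 1) (hm : m = min x (1-x))
    {y : ℝ} (hy0 : 0 ≤ y) (hy1 : y ≤ 1) (n : ℤ) :
    m^2 + 4*((n.natAbs - 1 : ℕ) : ℝ)^2 ≤ (y + x - 2*(n:ℝ))^2 := by
  have hmx : m ≤ x := hm ▸ min_le_left _ _
  have hm1x : m ≤ 1 - x := hm ▸ min_le_right _ _
  have hm0 : 0 < m := hm ▸ lt_min hx1 (by linarith)
  rcases n with k | k
  · rcases k with _ | k
    · simp only [Int.ofNat_eq_coe, Int.natAbs_natCast, Nat.zero_sub, Nat.cast_zero,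
        Int.cast_natCast]
      push_cast
      nlinarith
    · simp only [Int.ofNat_eq_coe, Int.natAbs_natCast, Nat.succ_sub_one, Int.cast_natCast]
      push_cast
      have hk0 : (0:ℝ) ≤ (k:ℝ) := Nat.cast_nonneg k
      have h : m + 2*(k:ℝ) ≤ -(y + x - 2*((k:ℝ)+1)) := by linarith
      have h2 : (m + 2*(k:ℝ))^2 ≤ (y + x - 2*((k:ℝ)+1))^2 := by
        calc (m + 2*(k:ℝ))^2 ≤ (-(y + x - 2*((k:ℝ)+1)))^2 :=
              pow_le_pow_left₀ (by positivity) h 2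
          _ = (y + x - 2*((k:ℝ)+1))^2 := by ring
      nlinarith
  · simp only [Int.natAbs_negSucc, Nat.succ_sub_one, Int.cast_negSucc]
    push_cast
    have hk0 : (0:ℝ) ≤ (k:ℝ) := Nat.cast_nonneg k
    have h : m + 2*(k:ℝ) ≤ y + x - 2*(-((k:ℝ)+1)) := by linarith
    have h2 : (m + 2*(k:ℝ))^2 ≤ (y + x - 2*(-((k:ℝ)+1)))^2 :=
      pow_le_pow_left₀ (by positivity) h 2
    nlinarith

lemma p_geom {x m : ℝ} (hx1 : 0 < x) (hx2 : x < 1) (hm : m = min x (1-x))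
    {y : ℝ} (hy0 : 0 ≤ y) (hy1 : y ≤ 1) (n : ℤ) (hn : n ≠ 0) :
    m^2 + 4*((n.natAbs - 1 : ℕ) : ℝ)^2 ≤ (y - x - 2*(n:ℝ))^2 := by
  have hmx : m ≤ x := hm ▸ min_le_left _ _
  have hm1x : m ≤ 1 - x := hm ▸ min_le_right _ _
  have hm0 : 0 < m := hm ▸ lt_min hx1 (by linarith)
  have hm2 : m ≤ 1/2 := by linarith
  rcases n with k | k
  · rcases k with _ | k
    · exact absurd rfl hn
    · simp only [Int.ofNat_eq_coe, Int.natAbs_natCast, Nat.succ_sub_one, Int.cast_natCast]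
      push_cast
      have hk0 : (0:ℝ) ≤ (k:ℝ) := Nat.cast_nonneg k
      have h : 2*(k:ℝ) + 1 ≤ -(y - x - 2*((k:ℝ)+1)) := by linarith
      have h2 : (2*(k:ℝ) + 1)^2 ≤ (y - x - 2*((k:ℝ)+1))^2 := by
        calc (2*(k:ℝ) + 1)^2 ≤ (-(y - x - 2*((k:ℝ)+1)))^2 :=
              pow_le_pow_left₀ (by positivity) h 2
          _ = (y - x - 2*((k:ℝ)+1))^2 := by ring
      nlinarith
  · simp only [Int.natAbs_negSucc, Nat.succ_sub_one, Int.cast_negSucc]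
    push_cast
    have hk0 : (0:ℝ) ≤ (k:ℝ) := Nat.cast_nonneg k
    have h : 2*(k:ℝ) + 1 ≤ y - x - 2*(-((k:ℝ)+1)) := by linarith
    have h2 : (2*(k:ℝ) + 1)^2 ≤ (y - x - 2*(-((k:ℝ)+1)))^2 :=
      pow_le_pow_left₀ (by positivity) h 2
    nlinarith

/-- sum of the reflected (negative) terms is at most `e^{-m²/(4τ)}·S(c)`. -/
lemma qsum_le {x m τ y c : ℝ} (hx1 : 0 < x) (hx2 : x < 1) (hm : m = min x (1-x))
    (hτ0 : 0 < τ) (hc : 0 < c) (hcτ : c * τ ≤ 1) (hy0 : 0 ≤ y) (hy1 : y ≤ 1) :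
    ∑' n : ℤ, Real.exp (-((y + x - 2 * (n:ℝ)) ^ 2) / (4 * τ)) ≤
      Real.exp (-(m^2)/(4*τ)) * (2 * Real.exp c / (1 - Real.exp (-c))) := by
  have hterm : ∀ n : ℤ, Real.exp (-((y + x - 2 * (n:ℝ)) ^ 2) / (4 * τ)) ≤
      Real.exp (-(m^2)/(4*τ)) * Real.exp (-(c * ((n.natAbs - 1 : ℕ) : ℝ)^2)) := by
    intro n
    exact exp_quad_le hτ0 hcτ (by positivity) (q_geom hx1 hx2 hm hy0 hy1 n)
  calc ∑' n : ℤ, Real.exp (-((y + x - 2 * (n:ℝ)) ^ 2) / (4 * τ))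
      ≤ ∑' n : ℤ, Real.exp (-(m^2)/(4*τ)) * Real.exp (-(c * ((n.natAbs - 1 : ℕ) : ℝ)^2)) :=
        Summable.tsum_le_tsum hterm (summable_gauss hτ0 (y + x)) ((summable_tail hc).mul_left _)
    _ = Real.exp (-(m^2)/(4*τ)) * ∑' n : ℤ, Real.exp (-(c * ((n.natAbs - 1 : ℕ) : ℝ)^2)) :=
        tsum_mul_left
    _ ≤ Real.exp (-(m^2)/(4*τ)) * (2 * Real.exp c / (1 - Real.exp (-c))) :=
        mul_le_mul_of_nonneg_left (tsum_tail_le hc) (Real.exp_pos _).le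

lemma psum_tail_le {x m τ y c : ℝ} (hx1 : 0 < x) (hx2 : x < 1) (hm : m = min x (1-x))
    (hτ0 : 0 < τ) (hc : 0 < c) (hcτ : c * τ ≤ 1) (hy0 : 0 ≤ y) (hy1 : y ≤ 1) :
    ∑' n : ℤ, (if n = 0 then 0 else Real.exp (-((y - x - 2 * (n:ℝ)) ^ 2) / (4 * τ))) ≤
      Real.exp (-(m^2)/(4*τ)) * (2 * Real.exp c / (1 - Real.exp (-c))) := by
  have hterm : ∀ n : ℤ, (if n = 0 then 0 else Real.exp (-((y - x - 2 * (n:ℝ)) ^ 2) / (4 * τ))) ≤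
      Real.exp (-(m^2)/(4*τ)) * Real.exp (-(c * ((n.natAbs - 1 : ℕ) : ℝ)^2)) := by
    intro n
    by_cases h : n = 0
    · simp [h]; positivity
    · simp only [h, if_false]
      exact exp_quad_le hτ0 hcτ (by positivity) (p_geom hx1 hx2 hm hy0 hy1 n h)
  have hsum : Summable (fun n : ℤ =>
      (if n = 0 then 0 else Real.exp (-((y - x - 2 * (n:ℝ)) ^ 2) / (4 * τ)))) := by
    refine Summable.of_nonneg_of_le (fun n => ?_) (fun n => ?_) (summable_gauss hτ0 (y - x))
    · by_cases h : n = 0 <;> simp [h, (Real.exp_pos _).le]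
    · by_cases h : n = 0 <;> simp [h, (Real.exp_pos _).le]
  calc ∑' n : ℤ, (if n = 0 then 0 else Real.exp (-((y - x - 2 * (n:ℝ)) ^ 2) / (4 * τ)))
      ≤ ∑' n : ℤ, Real.exp (-(m^2)/(4*τ)) * Real.exp (-(c * ((n.natAbs - 1 : ℕ) : ℝ)^2)) :=
        Summable.tsum_le_tsum hterm hsum ((summable_tail hc).mul_left _)
    _ = Real.exp (-(m^2)/(4*τ)) * ∑' n : ℤ, Real.exp (-(c * ((n.natAbs - 1 : ℕ) : ℝ)^2)) :=
        tsum_mul_left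
    _ ≤ Real.exp (-(m^2)/(4*τ)) * (2 * Real.exp c / (1 - Real.exp (-c))) :=
        mul_le_mul_of_nonneg_left (tsum_tail_le hc) (Real.exp_pos _).le

lemma numeric1' (E : ℝ) (hE1 : 2.7182818283 < E) (hE2 : E < 2.7182818286) :
    (E ^ 4)⁻¹ * (2 * E / (1 - E⁻¹)) ≤ 1/4 := by
  have hE0 : (0:ℝ) < E := by linarith
  have hgt1 : (1:ℝ) < E := by linarith
  have hpos : (0:ℝ) < 1 - E⁻¹ := by
    have : E⁻¹ < 1 := by rw [inv_lt_one_iff₀]; right; exact hgt1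
    linarith
  have hne : (0:ℝ) < E ^ 3 - E ^ 2 := by nlinarith
  have heq : (E ^ 4)⁻¹ * (2 * E / (1 - E⁻¹)) = 2 / (E ^ 3 - E ^ 2) := by
    rw [eq_div_iff (ne_of_gt hne)]
    have h1e : 1 - E⁻¹ = (E - 1)/E := by field_simp
    rw [h1e]
    have h5 : (-E^4 + E^5) ≠ 0 := by nlinarith
    field_simp [h5]
    rw [div_eq_iff (by linarith)]
    ring
  rw [heq]
  rw [div_le_iff₀ (by nlinarith)]
  nlinarith

lemma numeric1 : Real.exp (-(4:ℝ)) * (2 * Real.exp 1 / (1 - Real.exp (-1))) ≤ 1/4 := by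
  have hE1 := Real.exp_one_gt_d9
  have hE2 := Real.exp_one_lt_d9
  have hE0 : (0:ℝ) < Real.exp 1 := Real.exp_pos 1
  have h4 : Real.exp (-(4:ℝ)) = (Real.exp 1 ^ 4)⁻¹ := by
    rw [Real.exp_neg]
    congr 1
    rw [← Real.exp_nat_mul]; norm_num
  have h1 : Real.exp (-(1:ℝ)) = (Real.exp 1)⁻¹ := Real.exp_neg 1
  rw [h4, h1]
  exact numeric1' _ hE1 hE2

lemma numeric2 : (3:ℝ)/4 ≤ Real.exp (-(1/4:ℝ)) := by
  have hE2 := Real.exp_one_lt_d9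
  have he : Real.exp (1/4:ℝ) ^ 4 = Real.exp 1 := by
    rw [← Real.exp_nat_mul]; norm_num
  have h43 : Real.exp (1/4:ℝ) ≤ 4/3 := by
    apply le_of_pow_le_pow_left₀ (n := 4) (by norm_num) (by norm_num)
    rw [he]; nlinarith
  have := inv_anti₀ (Real.exp_pos (1/4:ℝ)) h43
  rw [Real.exp_neg]
  calc (3:ℝ)/4 = (4/3:ℝ)⁻¹ := by norm_num
    _ ≤ (Real.exp (1/4:ℝ))⁻¹ := this

lemma lower_f {x m τ y : ℝ} (hx1 : 0 < x) (hx2 : x < 1) (hm : m = min x (1-x))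
    (hτ0 : 0 < τ) (hτ : τ ≤ m^2/16) (hy1 : x ≤ y) (hy2 : y ≤ x + Real.sqrt τ) :
    (1:ℝ)/2 ≤ ∑' n : ℤ, (Real.exp (-((y - x - 2 * (n:ℝ)) ^ 2) / (4 * τ)) -
      Real.exp (-((y + x - 2 * (n:ℝ)) ^ 2) / (4 * τ))) := by
  have hmx : m ≤ x := hm ▸ min_le_left _ _
  have hm1x : m ≤ 1 - x := hm ▸ min_le_right _ _
  have hm0 : 0 < m := hm ▸ lt_min hx1 (by linarith)
  have hm2 : m ≤ 1/2 := by linarith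
  have hst : Real.sqrt τ ≤ m/4 := by
    have h := Real.sqrt_le_sqrt hτ
    rwa [show m^2/16 = (m/4)^2 by ring, Real.sqrt_sq (by positivity)] at h
  have hy0 : 0 ≤ y := le_trans hx1.le hy1
  have hy1' : y ≤ 1 := by linarith
  have hτ1 : τ ≤ 1 := by nlinarith
  have hp : Summable (fun n : ℤ => Real.exp (-((y - x - 2 * (n:ℝ)) ^ 2) / (4 * τ))) :=
    summable_gauss hτ0 (y - x)
  have hq : Summable (fun n : ℤ => Real.exp (-((y + x - 2 * (n:ℝ)) ^ 2) / (4 * τ))) :=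
    summable_gauss hτ0 (y + x)
  rw [Summable.tsum_sub hp hq]
  have hple : Real.exp (-((y - x - 2 * (((0:ℤ)):ℝ)) ^ 2) / (4 * τ)) ≤
      ∑' n : ℤ, Real.exp (-((y - x - 2 * (n:ℝ)) ^ 2) / (4 * τ)) :=
    Summable.le_tsum hp 0 (fun j _ => (Real.exp_pos _).le)
  have hp0 : Real.exp (-(1/4:ℝ)) ≤ Real.exp (-((y - x - 2 * (((0:ℤ)):ℝ)) ^ 2) / (4 * τ)) := by
    apply Real.exp_le_exp.2
    have hyx : (y - x)^2 ≤ τ := by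
      have h2 : y - x ≤ Real.sqrt τ := by linarith
      calc (y - x)^2 ≤ (Real.sqrt τ)^2 := by nlinarith [Real.sqrt_nonneg τ]
        _ = τ := Real.sq_sqrt hτ0.le
    have e0 : (y - x - 2 * (((0:ℤ)):ℝ)) ^ 2 = (y - x)^2 := by norm_num
    rw [e0, neg_div, neg_le_neg_iff, div_le_iff₀ (by positivity)]
    linarith
  have hqle : ∑' n : ℤ, Real.exp (-((y + x - 2 * (n:ℝ)) ^ 2) / (4 * τ)) ≤
      Real.exp (-(m^2)/(4*τ)) * (2 * Real.exp 1 / (1 - Real.exp (-1))) :=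
    qsum_le hx1 hx2 hm hτ0 one_pos (by linarith : (1:ℝ) * τ ≤ 1) hy0 hy1'
  have hm4 : Real.exp (-(m^2)/(4*τ)) ≤ Real.exp (-(4:ℝ)) := by
    apply Real.exp_le_exp.2
    rw [neg_div, neg_le_neg_iff, le_div_iff₀ (by positivity)]
    linarith
  have hS1 : (0:ℝ) ≤ 2 * Real.exp 1 / (1 - Real.exp (-1)) := by
    have h1 : Real.exp (-1:ℝ) < 1 := exp_lt_one_iff.2 (by norm_num)
    have h2 : (0:ℝ) < 1 - Real.exp (-1) := by linarith
    positivity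
  have hq4 : ∑' n : ℤ, Real.exp (-((y + x - 2 * (n:ℝ)) ^ 2) / (4 * τ)) ≤
      Real.exp (-(4:ℝ)) * (2 * Real.exp 1 / (1 - Real.exp (-1))) :=
    le_trans hqle (mul_le_mul_of_nonneg_right hm4 hS1)
  have hn1 := numeric1
  have hn2 := numeric2
  linarith [le_trans hp0 hple]

lemma upper_f {x m τ y c : ℝ} (hx1 : 0 < x) (hx2 : x < 1) (hm : m = min x (1-x))
    (hτ0 : 0 < τ) (hc : 0 < c) (hcτ : c * τ ≤ 1) (hy0 : 0 ≤ y) (hy1 : y ≤ 1) :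
    |∑' n : ℤ, (Real.exp (-((y - x - 2 * (n:ℝ)) ^ 2) / (4 * τ)) -
      Real.exp (-((y + x - 2 * (n:ℝ)) ^ 2) / (4 * τ)))| ≤
      Real.exp (-((y - x) ^ 2) / (4 * τ)) +
        2 * (Real.exp (-(m^2)/(4*τ)) * (2 * Real.exp c / (1 - Real.exp (-c)))) := by
  have hp : Summable (fun n : ℤ => Real.exp (-((y - x - 2 * (n:ℝ)) ^ 2) / (4 * τ))) :=
    summable_gauss hτ0 (y - x)
  have hq : Summable (fun n : ℤ => Real.exp (-((y + x - 2 * (n:ℝ)) ^ 2) / (4 * τ))) :=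
    summable_gauss hτ0 (y + x)
  rw [Summable.tsum_sub hp hq]
  have hqn : 0 ≤ ∑' n : ℤ, Real.exp (-((y + x - 2 * (n:ℝ)) ^ 2) / (4 * τ)) :=
    tsum_nonneg (fun n => (Real.exp_pos _).le)
  have hpn : 0 ≤ ∑' n : ℤ, Real.exp (-((y - x - 2 * (n:ℝ)) ^ 2) / (4 * τ)) :=
    tsum_nonneg (fun n => (Real.exp_pos _).le)
  have habs : |∑' n : ℤ, Real.exp (-((y - x - 2 * (n:ℝ)) ^ 2) / (4 * τ)) -
      ∑' n : ℤ, Real.exp (-((y + x - 2 * (n:ℝ)) ^ 2) / (4 * τ))| ≤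
      ∑' n : ℤ, Real.exp (-((y - x - 2 * (n:ℝ)) ^ 2) / (4 * τ)) +
      ∑' n : ℤ, Real.exp (-((y + x - 2 * (n:ℝ)) ^ 2) / (4 * τ)) :=
    abs_le.2 ⟨by linarith, by linarith⟩
  have hpsplit := Summable.tsum_eq_add_tsum_ite hp 0
  have hptail := psum_tail_le hx1 hx2 hm hτ0 hc hcτ hy0 hy1
  have hqle := qsum_le hx1 hx2 hm hτ0 hc hcτ hy0 hy1
  have hp0e : Real.exp (-((y - x - 2 * (((0:ℤ)):ℝ)) ^ 2) / (4 * τ))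
      = Real.exp (-((y - x) ^ 2) / (4 * τ)) := by norm_num
  refine le_trans habs ?_
  rw [hpsplit, hp0e]
  linarith

lemma kernel_tsum_continuousOn (x : ℝ) :
    ContinuousOn (fun p : ℝ × ℝ => ∑' n : ℤ,
      (Real.exp (-((p.2 - x - 2 * (n:ℝ)) ^ 2) / (4 * p.1)) -
        Real.exp (-((p.2 + x - 2 * (n:ℝ)) ^ 2) / (4 * p.1))))
      (Set.Ioi 0 ×ˢ (Set.univ : Set ℝ)) := by
  apply continuousOn_of_forall_continuousAt
  intro p hp
  have hp1 : (0:ℝ) < p.1 := hp.1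
  set τ₀ := p.1 with hτ₀
  set y₀ := p.2 with hy₀
  set A : ℝ := |y₀| + |x| + 1 with hA
  set KC : ℝ := Real.exp ((2*A+1)/(4*(τ₀/2))) with hKC
  set r : ℝ := Real.exp (-(τ₀+1)⁻¹) with hr
  have hr0 : (0:ℝ) ≤ r := (Real.exp_pos _).le
  have hr1 : r < 1 := exp_lt_one_iff.2 (neg_lt_zero.2 (by positivity))
  set K : Set (ℝ × ℝ) := Set.Icc (τ₀/2) (τ₀+1) ×ˢ Set.Icc (y₀-1) (y₀+1) with hK
  have hKmem : K ∈ nhds p := by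
    rw [hK, ← @Prod.mk.eta _ _ p]
    exact prod_mem_nhds (Icc_mem_nhds (by linarith) (by linarith))
      (Icc_mem_nhds (by linarith) (by linarith))
  have hcont : ContinuousOn (fun q : ℝ × ℝ => ∑' n : ℤ,
      (Real.exp (-((q.2 - x - 2 * (n:ℝ)) ^ 2) / (4 * q.1)) -
        Real.exp (-((q.2 + x - 2 * (n:ℝ)) ^ 2) / (4 * q.1)))) K := by
    apply continuousOn_tsum (u := fun n : ℤ => KC * r ^ n.natAbs)
    · intro n
      have hden : ∀ q ∈ K, (4 : ℝ) * q.1 ≠ 0 := by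
        intro q hq
        have h := hq.1.1
        exact ne_of_gt (by simp only [hτ₀] at h ⊢; linarith : (0:ℝ) < 4 * q.1)
      apply ContinuousOn.sub
      · exact Real.continuous_exp.comp_continuousOn
          (ContinuousOn.div (by fun_prop) (by fun_prop) hden)
      · exact Real.continuous_exp.comp_continuousOn
          (ContinuousOn.div (by fun_prop) (by fun_prop) hden)
    · exact (summable_pow_natAbs' hr0 hr1).mul_left _
    · intro n q hq
      have hq1 : τ₀/2 ≤ q.1 := hq.1.1
      have hq1' : q.1 ≤ τ₀ + 1 := hq.1.2
      have hq10 : 0 < q.1 := lt_of_lt_of_le (by linarith) hq1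
      have hy2 : |q.2| ≤ |y₀| + 1 := by
        rcases abs_le.1 (le_refl |q.2|) with _
        have h1 : y₀ - 1 ≤ q.2 := hq.2.1
        have h2 : q.2 ≤ y₀ + 1 := hq.2.2
        rw [abs_le]
        constructor <;> [linarith [neg_abs_le y₀]; linarith [le_abs_self y₀]]
      have key : ∀ a : ℝ, |a| ≤ A →
          Real.exp (-((a - 2*(n:ℝ))^2) / (4*q.1)) ≤ KC * r ^ n.natAbs := by
        intro a ha
        refine le_trans (gauss_term_le hq10 a n) ?_
        have h1 : Real.exp ((2*|a|+1)/(4*q.1)) ≤ KC := by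
          apply Real.exp_le_exp.2
          apply div_le_div₀ (by positivity) (by linarith [abs_nonneg a]) (by linarith)
          linarith
        have h2 : Real.exp (-(q.1)⁻¹) ^ n.natAbs ≤ r ^ n.natAbs := by
          apply pow_le_pow_left₀ (Real.exp_pos _).le
          apply Real.exp_le_exp.2
          rw [neg_le_neg_iff]
          exact inv_anti₀ (by linarith) hq1'
        calc Real.exp ((2*|a|+1)/(4*q.1)) * Real.exp (-(q.1)⁻¹) ^ n.natAbs
            ≤ KC * Real.exp (-(q.1)⁻¹) ^ n.natAbs :=
              mul_le_mul_of_nonneg_right h1 (by positivity)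
          _ ≤ KC * r ^ n.natAbs := mul_le_mul_of_nonneg_left h2 (by positivity)
      have hma : |q.2 - x| ≤ A := by
        rw [hA]
        calc |q.2 - x| ≤ |q.2| + |x| := abs_sub _ _
          _ ≤ |y₀| + |x| + 1 := by linarith
      have hpa : |q.2 + x| ≤ A := by
        rw [hA]
        calc |q.2 + x| ≤ |q.2| + |x| := abs_add_le _ _
          _ ≤ |y₀| + |x| + 1 := by linarith
      have e1 := key _ hma
      have e2 := key _ hpa
      have g1 : (0:ℝ) ≤ Real.exp (-((q.2 - x - 2*(n:ℝ))^2) / (4*q.1)) := (Real.exp_pos _).le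
      have g2 : (0:ℝ) ≤ Real.exp (-((q.2 + x - 2*(n:ℝ))^2) / (4*q.1)) := (Real.exp_pos _).le
      rw [Real.norm_eq_abs, abs_le]
      constructor <;> [linarith; linarith]
  exact hcont.continuousAt hKmem

lemma kernel_continuousOn (x : ℝ) :
    ContinuousOn (fun p : ℝ × ℝ => dirichletHeatKernel p.1 x p.2)
      (Set.Ioi 0 ×ˢ (Set.univ : Set ℝ)) := by
  unfold dirichletHeatKernel
  apply ContinuousOn.mul
  · apply ContinuousOn.inv₀
    · exact (Real.continuous_sqrt.comp (by continuity)).continuousOn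
    · intro p hp
      have hp1 : (0:ℝ) < p.1 := hp.1
      exact ne_of_gt (Real.sqrt_pos.2 (by positivity))
  · exact kernel_tsum_continuousOn x

lemma kernel_y_continuous (x : ℝ) {τ : ℝ} (hτ : 0 < τ) :
    Continuous (fun y => dirichletHeatKernel τ x y) := by
  have := (kernel_continuousOn x).comp_continuous
    (f := fun y : ℝ => ((τ, y) : ℝ × ℝ)) (by continuity)
    (fun y => ⟨hτ, Set.mem_univ _⟩)
  exact this

lemma kernel_sq_lower {x m τ y : ℝ} (hx1 : 0 < x) (hx2 : x < 1) (hm : m = min x (1-x))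
    (hτ0 : 0 < τ) (hτ : τ ≤ m^2/16) (hy1 : x ≤ y) (hy2 : y ≤ x + Real.sqrt τ) :
    (4*π*τ)⁻¹ * (1/4) ≤ dirichletHeatKernel τ x y ^ 2 := by
  have hf := lower_f hx1 hx2 hm hτ0 hτ hy1 hy2
  have hpos : (0:ℝ) < 4*π*τ := by positivity
  have hs : (0:ℝ) < Real.sqrt (4*π*τ) := Real.sqrt_pos.2 hpos
  have h1 : (Real.sqrt (4*π*τ))⁻¹ * (1/2) ≤ dirichletHeatKernel τ x y := by
    unfold dirichletHeatKernel
    exact mul_le_mul_of_nonneg_left hf (by positivity)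
  calc (4*π*τ)⁻¹ * (1/4) = ((Real.sqrt (4*π*τ))⁻¹ * (1/2))^2 := by
        rw [mul_pow, inv_pow, Real.sq_sqrt hpos.le]; norm_num
    _ ≤ dirichletHeatKernel τ x y ^ 2 := by
        apply pow_le_pow_left₀ (by positivity) h1

lemma kernel_sq_upper {x m τ y c : ℝ} (hx1 : 0 < x) (hx2 : x < 1) (hm : m = min x (1-x))
    (hτ0 : 0 < τ) (hc : 0 < c) (hcτ : c * τ ≤ 1) (hy0 : 0 ≤ y) (hy1 : y ≤ 1) :
    dirichletHeatKernel τ x y ^ 2 ≤ (4*π*τ)⁻¹ *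
      (2 * Real.exp (-((y - x) ^ 2) / (2 * τ)) +
        2 * (2 * (Real.exp (-(m^2)/(4*τ)) * (2 * Real.exp c / (1 - Real.exp (-c)))))^2) := by
  have hf := upper_f hx1 hx2 hm hτ0 hc hcτ hy0 hy1
  have hpos : (0:ℝ) < 4*π*τ := by positivity
  set f := ∑' n : ℤ, (Real.exp (-((y - x - 2 * (n:ℝ)) ^ 2) / (4 * τ)) -
      Real.exp (-((y + x - 2 * (n:ℝ)) ^ 2) / (4 * τ))) with hfdef
  set a := Real.exp (-((y - x) ^ 2) / (4 * τ)) with hadef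
  set b := 2 * (Real.exp (-(m^2)/(4*τ)) * (2 * Real.exp c / (1 - Real.exp (-c)))) with hbdef
  have ha2 : a^2 = Real.exp (-((y - x) ^ 2) / (2 * τ)) := by
    rw [hadef, sq, ← Real.exp_add]
    congr 1
    field_simp
    ring
  have hfa : f^2 ≤ (a + b)^2 := by
    rw [← sq_abs f]
    apply pow_le_pow_left₀ (abs_nonneg f) hf
  have hab : (a+b)^2 ≤ 2*a^2 + 2*b^2 := by nlinarith [sq_nonneg (a - b)]
  unfold dirichletHeatKernel
  rw [mul_pow, inv_pow, Real.sq_sqrt hpos.le]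
  rw [← hfdef, ← ha2]
  apply mul_le_mul_of_nonneg_left _ (by positivity)
  linarith

lemma gauss_integral_le {τ : ℝ} (x : ℝ) (hτ : 0 < τ) :
    ∫ y in (0:ℝ)..1, Real.exp (-((y - x) ^ 2) / (2*τ)) ≤ Real.sqrt (2*π) * Real.sqrt τ := by
  have hb : (0:ℝ) < (2*τ)⁻¹ := by positivity
  have hfun : (fun y : ℝ => Real.exp (-((y - x) ^ 2) / (2*τ)))
      = (fun y : ℝ => Real.exp (-(2*τ)⁻¹ * (y - x)^2)) := by
    funext y; congr 1; field_simp
  have hint0 := integrable_exp_neg_mul_sq hb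
  have hint : Integrable (fun y : ℝ => Real.exp (-(2*τ)⁻¹ * (y - x)^2)) :=
    Integrable.comp_sub_right hint0 x
  rw [intervalIntegral.integral_of_le (by norm_num : (0:ℝ) ≤ 1), hfun]
  calc ∫ y in Set.Ioc (0:ℝ) 1, Real.exp (-(2*τ)⁻¹ * (y - x)^2)
      ≤ ∫ y : ℝ, Real.exp (-(2*τ)⁻¹ * (y - x)^2) :=
        setIntegral_le_integral hint (Filter.Eventually.of_forall (fun y => (Real.exp_pos _).le))
    _ = ∫ y : ℝ, Real.exp (-(2*τ)⁻¹ * y^2) :=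
        integral_sub_right_eq_self (fun y : ℝ => Real.exp (-(2*τ)⁻¹ * y^2)) x
    _ = Real.sqrt (π / (2*τ)⁻¹) := integral_gaussian _
    _ = Real.sqrt (2*π) * Real.sqrt τ := by
        rw [← Real.sqrt_mul (by positivity)]
        congr 1
        field_simp

lemma kernel_zero (x y : ℝ) : dirichletHeatKernel 0 x y = 0 := by
  unfold dirichletHeatKernel
  norm_num

lemma integral_sq_lower {x m τ : ℝ} (hx1 : 0 < x) (hx2 : x < 1) (hm : m = min x (1-x))
    (hτ0 : 0 < τ) (hτ : τ ≤ m^2/16) :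
    (16*π)⁻¹ / Real.sqrt τ ≤ ∫ y in (0:ℝ)..1, dirichletHeatKernel τ x y ^ 2 := by
  have hmx : m ≤ x := hm ▸ min_le_left _ _
  have hm1x : m ≤ 1 - x := hm ▸ min_le_right _ _
  have hm0 : 0 < m := hm ▸ lt_min hx1 (by linarith)
  have hst : Real.sqrt τ ≤ m/4 := by
    have h := Real.sqrt_le_sqrt hτ
    rwa [show m^2/16 = (m/4)^2 by ring, Real.sqrt_sq (by positivity)] at h
  have hst0 : 0 < Real.sqrt τ := Real.sqrt_pos.2 hτ0
  have hcont : Continuous (fun y => dirichletHeatKernel τ x y ^ 2) :=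
    (kernel_y_continuous x hτ0).pow 2
  have hInt : IntegrableOn (fun y => dirichletHeatKernel τ x y ^ 2) (Set.Ioc 0 1) :=
    hcont.integrableOn_Ioc
  rw [intervalIntegral.integral_of_le (by norm_num : (0:ℝ) ≤ 1)]
  have hsub : Set.Ioc x (x + Real.sqrt τ) ⊆ Set.Ioc 0 1 := by
    apply Set.Ioc_subset_Ioc hx1.le
    linarith
  have hmono : ∫ y in Set.Ioc x (x + Real.sqrt τ), dirichletHeatKernel τ x y ^ 2
      ≤ ∫ y in Set.Ioc (0:ℝ) 1, dirichletHeatKernel τ x y ^ 2 :=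
    setIntegral_mono_set hInt
      (Filter.Eventually.of_forall (fun y => sq_nonneg _))
      (HasSubset.Subset.eventuallyLE hsub)
  refine le_trans ?_ hmono
  have hconst := setIntegral_ge_of_const_le (μ := volume)
    (f := fun y => dirichletHeatKernel τ x y ^ 2)
    (s := Set.Ioc x (x + Real.sqrt τ)) (c := (4*π*τ)⁻¹ * (1/4))
    measurableSet_Ioc (measure_Ioc_lt_top).ne
    (fun y hy => kernel_sq_lower hx1 hx2 hm hτ0 hτ hy.1.le hy.2)
    (hInt.mono_set hsub)
  have hvol : (volume (Set.Ioc x (x + Real.sqrt τ))).toReal = Real.sqrt τ := by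
    rw [Real.volume_Ioc]
    rw [ENNReal.toReal_ofReal (by linarith)]
    ring
  rw [measureReal_def, hvol] at hconst
  refine le_trans (le_of_eq ?_) hconst
  have hpi : (0:ℝ) < π := pi_pos
  obtain ⟨u, hu0, huτ⟩ : ∃ u:ℝ, 0 < u ∧ τ = u * u :=
    ⟨Real.sqrt τ, hst0, (Real.mul_self_sqrt hτ0.le).symm⟩
  rw [huτ, Real.sqrt_mul_self hu0.le, smul_eq_mul]
  field_simp
  ring

lemma integral_sq_upper {x m τ c T' : ℝ} (hx1 : 0 < x) (hx2 : x < 1) (hm : m = min x (1-x))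
    (hτ0 : 0 < τ) (hc : 0 < c) (hcτ : c * τ ≤ 1) (hτT : τ ≤ T') :
    ∫ y in (0:ℝ)..1, dirichletHeatKernel τ x y ^ 2 ≤
      ((4*π)⁻¹ * (2 * Real.sqrt (2*π) +
        16 * (2 * Real.exp c / (1 - Real.exp (-c)))^2 * Real.sqrt T' / m^2)) / Real.sqrt τ := by
  have hmx : m ≤ x := hm ▸ min_le_left _ _
  have hm1x : m ≤ 1 - x := hm ▸ min_le_right _ _
  have hm0 : 0 < m := hm ▸ lt_min hx1 (by linarith)
  have hT0 : 0 < T' := lt_of_lt_of_le hτ0 hτT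
  have hst0 : 0 < Real.sqrt τ := Real.sqrt_pos.2 hτ0
  set S := 2 * Real.exp c / (1 - Real.exp (-c)) with hSdef
  have hS0 : 0 ≤ S := by
    have h1 : Real.exp (-c) < 1 := exp_lt_one_iff.2 (by linarith)
    have h2 : (0:ℝ) < 1 - Real.exp (-c) := by linarith
    positivity
  set b := 2 * (Real.exp (-(m^2)/(4*τ)) * S) with hbdef
  set G : ℝ → ℝ := fun y => Real.exp (-((y - x) ^ 2) / (2 * τ)) with hGdef
  have hGcont : Continuous G := by fun_prop
  have hcont : Continuous (fun y => dirichletHeatKernel τ x y ^ 2) :=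
    (kernel_y_continuous x hτ0).pow 2
  -- pointwise bound and integral comparison
  have hmono : ∫ y in (0:ℝ)..1, dirichletHeatKernel τ x y ^ 2
      ≤ ∫ y in (0:ℝ)..1, (4*π*τ)⁻¹ * (2 * G y + 2 * b^2) := by
    apply intervalIntegral.integral_mono_on (by norm_num)
      (hcont.intervalIntegrable _ _)
      (Continuous.intervalIntegrable (by fun_prop) _ _)
    intro y hy
    exact kernel_sq_upper hx1 hx2 hm hτ0 hc hcτ hy.1 hy.2
  refine le_trans hmono ?_
  have hGint : IntervalIntegrable G volume 0 1 := hGcont.intervalIntegrable _ _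
  have heval : ∫ y in (0:ℝ)..1, (4*π*τ)⁻¹ * (2 * G y + 2 * b^2)
      = (4*π*τ)⁻¹ * (2 * (∫ y in (0:ℝ)..1, G y) + 2 * b^2) := by
    rw [intervalIntegral.integral_const_mul]
    congr 1
    rw [intervalIntegral.integral_add (hGint.const_mul 2) (intervalIntegrable_const)]
    rw [intervalIntegral.integral_const_mul, intervalIntegral.integral_const]
    norm_num
  rw [heval]
  -- bound the pieces
  have hG : ∫ y in (0:ℝ)..1, G y ≤ Real.sqrt (2*π) * Real.sqrt τ := gauss_integral_le x hτ0
  have hGnonneg : 0 ≤ ∫ y in (0:ℝ)..1, G y :=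
    intervalIntegral.integral_nonneg (by norm_num) (fun y _ => (Real.exp_pos _).le)
  have hbb : b^2 ≤ 8 * S^2 * Real.sqrt T' * Real.sqrt τ / m^2 := by
    have hesq : Real.exp (-(m^2)/(4*τ)) ^ 2 = Real.exp (-(m^2)/(2*τ)) := by
      rw [sq, ← Real.exp_add]
      congr 1
      field_simp
      ring
    have hv : (0:ℝ) < m^2/(2*τ) := by positivity
    have hexpv : m^2/(2*τ) < Real.exp (m^2/(2*τ)) := by
      have := Real.add_one_le_exp (m^2/(2*τ))
      linarith
    have hinv : Real.exp (-(m^2)/(2*τ)) ≤ 2*τ/m^2 := by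
      rw [show -(m^2)/(2*τ) = -(m^2/(2*τ)) by ring, Real.exp_neg]
      have h2 : (m^2/(2*τ))⁻¹ = 2*τ/m^2 := by
        field_simp
      rw [← h2]
      exact inv_anti₀ hv hexpv.le
    have hτle : τ ≤ Real.sqrt T' * Real.sqrt τ := by
      have h1 : Real.sqrt τ ≤ Real.sqrt T' := Real.sqrt_le_sqrt hτT
      calc τ = Real.sqrt τ * Real.sqrt τ := (Real.mul_self_sqrt hτ0.le).symm
        _ ≤ Real.sqrt T' * Real.sqrt τ := mul_le_mul_of_nonneg_right h1 hst0.le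
    have hb2 : b^2 = 4 * Real.exp (-(m^2)/(2*τ)) * S^2 := by
      rw [hbdef, mul_pow, mul_pow, hesq]
      ring
    rw [hb2]
    have step1 : 4 * Real.exp (-(m^2)/(2*τ)) * S^2 ≤ 4 * (2*τ/m^2) * S^2 := by
      apply mul_le_mul_of_nonneg_right _ (sq_nonneg S)
      nlinarith
    refine le_trans step1 ?_
    rw [div_eq_mul_inv, div_eq_mul_inv]
    have hminv : (0:ℝ) ≤ (m^2)⁻¹ := by positivity
    nlinarith [mul_le_mul_of_nonneg_right hτle hminv, sq_nonneg S,
      mul_le_mul_of_nonneg_right (mul_le_mul_of_nonneg_right hτle hminv) (sq_nonneg S)]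
  -- final arithmetic
  have hfinal : (4*π*τ)⁻¹ * (2 * (Real.sqrt (2*π) * Real.sqrt τ) +
      2 * (8 * S^2 * Real.sqrt T' * Real.sqrt τ / m^2))
      = ((4*π)⁻¹ * (2 * Real.sqrt (2*π) + 16 * S^2 * Real.sqrt T' / m^2)) / Real.sqrt τ := by
    have hpi : (0:ℝ) < π := pi_pos
    obtain ⟨u, hu0, huτ⟩ : ∃ u:ℝ, 0 < u ∧ τ = u * u :=
      ⟨Real.sqrt τ, hst0, (Real.mul_self_sqrt hτ0.le).symm⟩
    rw [huτ, Real.sqrt_mul_self hu0.le]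
    field_simp
    ring
  rw [← hfinal]
  have hmain : 2 * (∫ y in (0:ℝ)..1, G y) + 2 * b^2 ≤
      2 * (Real.sqrt (2*π) * Real.sqrt τ) + 2 * (8 * S^2 * Real.sqrt T' * Real.sqrt τ / m^2) := by
    linarith
  apply mul_le_mul_of_nonneg_left hmain (by positivity)

/-- For every `T > 0` and every `x ∈ (0,1)` there is `C > 0` such that for all
`t ∈ (0,T]` and `0 < ε < t`, `∫_{t-ε}^t ∫_0^1 H_{t-s}(x,y)² dy ds ≥ C √ε`. -/
theorem squared_dirichlet_heat_kernel_lower_bound :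
    ∀ T : ℝ, 0 < T → ∀ x ∈ Set.Ioo (0 : ℝ) 1,
      ∃ C : ℝ, 0 < C ∧
        ∀ t ∈ Set.Ioc (0 : ℝ) T, ∀ ε : ℝ, 0 < ε → ε < t →
          C * Real.sqrt ε ≤
            ∫ s in (t - ε)..t, ∫ y in (0 : ℝ)..1, (dirichletHeatKernel (t - s) x y) ^ 2 := by
  intro T hT x hx
  obtain ⟨hx1, hx2⟩ := hx
  set m := min x (1-x) with hm
  have hmx : m ≤ x := min_le_left _ _
  have hm1x : m ≤ 1 - x := min_le_right _ _
  have hm0 : 0 < m := lt_min hx1 (by linarith)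
  set T' := max T 1 with hT'
  have hT'0 : (0:ℝ) < T' := lt_of_lt_of_le one_pos (le_max_right _ _)
  have hTT' : T ≤ T' := le_max_left _ _
  set c := T'⁻¹ with hc
  have hc0 : 0 < c := by positivity
  set ε₀ := min (m^2/16) T with hε₀
  have hε₀0 : 0 < ε₀ := lt_min (by positivity) hT
  have hε₀T : ε₀ ≤ T := min_le_right _ _
  have hε₀m : ε₀ ≤ m^2/16 := min_le_left _ _
  set B := ((4*π)⁻¹ * (2 * Real.sqrt (2*π) +
        16 * (2 * Real.exp c / (1 - Real.exp (-c)))^2 * Real.sqrt T' / m^2)) with hB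
  set C := (8*π)⁻¹ * Real.sqrt ε₀ / Real.sqrt T with hC
  have hsqε₀ : 0 < Real.sqrt ε₀ := Real.sqrt_pos.2 hε₀0
  have hsqT : 0 < Real.sqrt T := Real.sqrt_pos.2 hT
  have hC0 : 0 < C := by
    rw [hC]
    apply div_pos (mul_pos (by positivity) hsqε₀) hsqT
  refine ⟨C, hC0, ?_⟩
  intro t ht ε hε0 hεt
  obtain ⟨ht0, htT⟩ := ht
  set g : ℝ → ℝ := fun s => ∫ y in (0:ℝ)..1, dirichletHeatKernel (t - s) x y ^ 2 with hg
  show C * Real.sqrt ε ≤ ∫ s in (t - ε)..t, g s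
  have hgnn : ∀ s, 0 ≤ g s := fun s =>
    intervalIntegral.integral_nonneg (by norm_num) (fun y _ => sq_nonneg _)
  have hgt0 : g t = 0 := by
    rw [hg]
    simp only [sub_self, kernel_zero]
    simp
  -- measurability of g
  have hφ : ContinuousOn (fun q : ℝ × ℝ => dirichletHeatKernel (t - q.1) x q.2 ^ 2)
      ((Set.Ioo (t-ε) t) ×ˢ (Set.Ioc (0:ℝ) 1)) := by
    have hmap : Set.MapsTo (fun q : ℝ × ℝ => ((t - q.1, q.2) : ℝ × ℝ))
        ((Set.Ioo (t-ε) t) ×ˢ (Set.Ioc (0:ℝ) 1)) (Set.Ioi 0 ×ˢ (Set.univ : Set ℝ)) := by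
      intro q hq
      refine ⟨?_, Set.mem_univ _⟩
      have := hq.1.2
      simp only [Set.mem_Ioi]
      linarith
    exact (((kernel_continuousOn x).comp
      (Continuous.continuousOn (by continuity)) hmap)).pow 2
  have hmeas2 : AEStronglyMeasurable (fun q : ℝ × ℝ => dirichletHeatKernel (t - q.1) x q.2 ^ 2)
      ((volume.restrict (Set.Ioo (t-ε) t)).prod (volume.restrict (Set.Ioc (0:ℝ) 1))) := by
    rw [Measure.prod_restrict]
    exact hφ.aestronglyMeasurable (measurableSet_Ioo.prod measurableSet_Ioc)
  have hgmeas' : AEStronglyMeasurable g (volume.restrict (Set.Ioo (t-ε) t)) := by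
    have h1 := hmeas2.integral_prod_right'
    apply h1.congr
    refine Filter.Eventually.of_forall (fun s => ?_)
    show (∫ y in Set.Ioc (0:ℝ) 1, dirichletHeatKernel (t - s) x y ^ 2) = g s
    rw [show g s = ∫ y in (0:ℝ)..1, dirichletHeatKernel (t - s) x y ^ 2 from rfl,
      intervalIntegral.integral_of_le (by norm_num : (0:ℝ) ≤ 1)]
  have hgmeas : AEStronglyMeasurable g (volume.restrict (Set.Ioc (t-ε) t)) := by
    rw [show volume.restrict (Set.Ioc (t-ε) t) = volume.restrict (Set.Ioo (t-ε) t) from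
      (Measure.restrict_congr_set Ioo_ae_eq_Ioc).symm]
    exact hgmeas'
  -- rpow integrability helper
  have hrpow : ∀ a : ℝ, 0 < a →
      IntervalIntegrable (fun s : ℝ => (t - s) ^ (-(1/2):ℝ)) volume (t-a) t := by
    intro a ha
    have h1 : IntervalIntegrable (fun u : ℝ => u ^ (-(1/2):ℝ)) volume 0 a :=
      intervalIntegral.intervalIntegrable_rpow' (by norm_num)
    have h2 := h1.comp_sub_left t
    have h3 : t - 0 = t := by ring
    rw [h3] at h2
    exact h2.symm
  -- domination and integrability of g
  have hbound : ∀ s ∈ Set.Ioc (t-ε) t, ‖g s‖ ≤ B * (t - s) ^ (-(1/2):ℝ) := by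
    intro s hs
    rcases eq_or_lt_of_le hs.2 with h | h
    · rw [h, hgt0, sub_self, Real.zero_rpow (by norm_num : (-(1/2):ℝ) ≠ 0)]
      simp
    · have hτ0 : 0 < t - s := by linarith
      have hτT : t - s ≤ T := by
        have := hs.1
        linarith
      have hcτ : c * (t - s) ≤ 1 := by
        have h1 : t - s ≤ T' := le_trans hτT hTT'
        calc c * (t - s) = (t - s) / T' := by rw [hc]; ring
          _ ≤ 1 := (div_le_one hT'0).2 h1
      have hup := integral_sq_upper hx1 hx2 hm hτ0 hc0 hcτ (le_trans hτT hTT')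
      rw [Real.norm_eq_abs, abs_of_nonneg (hgnn s)]
      have hrw : B * (t - s) ^ (-(1/2):ℝ) = B / Real.sqrt (t - s) := by
        rw [Real.rpow_neg hτ0.le, ← Real.sqrt_eq_rpow, div_eq_mul_inv]
      rw [hrw]
      exact hup
  have hgint : IntervalIntegrable g volume (t-ε) t := by
    rw [intervalIntegrable_iff_integrableOn_Ioc_of_le (by linarith)]
    apply Integrable.mono'
      ((intervalIntegrable_iff_integrableOn_Ioc_of_le (by linarith)).1
        ((hrpow ε hε0).const_mul B))
      hgmeas
    exact (ae_restrict_iff' measurableSet_Ioc).2 (Filter.Eventually.of_forall hbound)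
  -- split at δ
  set δ := min ε ε₀ with hδ
  have hδ0 : 0 < δ := lt_min hε0 hε₀0
  have hδε : δ ≤ ε := min_le_left _ _
  have hδε₀ : δ ≤ ε₀ := min_le_right _ _
  have hδt : δ < t := lt_of_le_of_lt hδε hεt
  have hsub1 : IntervalIntegrable g volume (t-ε) (t-δ) := by
    apply hgint.mono_set
    rw [Set.uIcc_of_le (by linarith), Set.uIcc_of_le (by linarith)]
    apply Set.Icc_subset_Icc le_rfl (by linarith)
  have hsub2 : IntervalIntegrable g volume (t-δ) t := by
    apply hgint.mono_set
    rw [Set.uIcc_of_le (by linarith), Set.uIcc_of_le (by linarith)]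
    apply Set.Icc_subset_Icc (by linarith) le_rfl
  have hsplit := intervalIntegral.integral_add_adjacent_intervals hsub1 hsub2
  have hpos1 : 0 ≤ ∫ s in (t-ε)..(t-δ), g s :=
    intervalIntegral.integral_nonneg (by linarith) (fun s _ => hgnn s)
  -- core lower bound on [t-δ, t]
  have hlow : IntervalIntegrable (fun s => (16*π)⁻¹ * (t - s) ^ (-(1/2):ℝ)) volume (t-δ) t :=
    (hrpow δ hδ0).const_mul _
  have hcore : ∫ s in (t-δ)..t, (16*π)⁻¹ * (t - s) ^ (-(1/2):ℝ) ≤ ∫ s in (t-δ)..t, g s := by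
    apply intervalIntegral.integral_mono_on (by linarith) hlow hsub2
    intro s hs
    rcases eq_or_lt_of_le hs.2 with h | h
    · rw [h, hgt0, sub_self, Real.zero_rpow (by norm_num : (-(1/2):ℝ) ≠ 0)]
      simp
    · have hτ0 : 0 < t - s := by linarith
      have hτε₀ : t - s ≤ ε₀ := by
        have := hs.1
        linarith
      have hlo := integral_sq_lower hx1 hx2 hm hτ0 (le_trans hτε₀ hε₀m)
      have hrw : (16*π)⁻¹ * (t - s) ^ (-(1/2):ℝ) = (16*π)⁻¹ / Real.sqrt (t - s) := by
        rw [Real.rpow_neg hτ0.le, ← Real.sqrt_eq_rpow, div_eq_mul_inv]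
      rw [hrw]
      exact hlo
  have heval : ∫ s in (t-δ)..t, (16*π)⁻¹ * (t - s) ^ (-(1/2):ℝ)
      = (16*π)⁻¹ * (2 * Real.sqrt δ) := by
    rw [intervalIntegral.integral_const_mul]
    congr 1
    have h1 : ∫ s in (t-δ)..t, (t - s) ^ (-(1/2):ℝ) = ∫ u in (0:ℝ)..δ, u ^ (-(1/2):ℝ) := by
      have h0 := intervalIntegral.integral_comp_sub_left
        (a := t-δ) (b := t) (fun u : ℝ => u ^ (-(1/2):ℝ)) t
      rw [h0]
      norm_num
    rw [h1, integral_rpow (Or.inl (by norm_num : (-1:ℝ) < -(1/2)))]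
    have h2 : (-(1/2) : ℝ) + 1 = 1/2 := by norm_num
    rw [h2, Real.zero_rpow (by norm_num : (1/2:ℝ) ≠ 0), ← Real.sqrt_eq_rpow]
    ring
  -- conclude
  have h2δ : C * Real.sqrt ε ≤ (16*π)⁻¹ * (2 * Real.sqrt δ) := by
    have hpinv : (16*π)⁻¹ * 2 = (8*π)⁻¹ := by
      rw [show (16:ℝ)*π = 2*(8*π) by ring, mul_inv]
      have hpi : (8:ℝ)*π ≠ 0 := by positivity
      field_simp
    rcases le_total ε ε₀ with h | h
    · have hδ' : δ = ε := min_eq_left h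
      rw [hδ']
      have h1 : Real.sqrt ε₀ ≤ Real.sqrt T := Real.sqrt_le_sqrt hε₀T
      have h2 : C ≤ (8*π)⁻¹ := by
        rw [hC, div_le_iff₀ hsqT]
        calc (8*π)⁻¹ * Real.sqrt ε₀ ≤ (8*π)⁻¹ * Real.sqrt T :=
              mul_le_mul_of_nonneg_left h1 (by positivity)
          _ = (8*π)⁻¹ * Real.sqrt T := rfl
      calc C * Real.sqrt ε ≤ (8*π)⁻¹ * Real.sqrt ε :=
            mul_le_mul_of_nonneg_right h2 (Real.sqrt_nonneg _)
        _ = (16*π)⁻¹ * (2 * Real.sqrt ε) := by rw [← hpinv]; ring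
    · have hδ' : δ = ε₀ := min_eq_right h
      rw [hδ']
      have h1 : Real.sqrt ε ≤ Real.sqrt T := Real.sqrt_le_sqrt (by linarith)
      have h2 : C * Real.sqrt T = (8*π)⁻¹ * Real.sqrt ε₀ := by
        rw [hC]
        field_simp
      calc C * Real.sqrt ε ≤ C * Real.sqrt T := mul_le_mul_of_nonneg_left h1 hC0.le
        _ = (8*π)⁻¹ * Real.sqrt ε₀ := h2
        _ = (16*π)⁻¹ * (2 * Real.sqrt ε₀) := by rw [← hpinv]; ring
  calc C * Real.sqrt ε ≤ (16*π)⁻¹ * (2 * Real.sqrt δ) := h2δ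
    _ ≤ ∫ s in (t-δ)..t, g s := heval ▸ hcore
    _ ≤ ∫ s in (t-ε)..t, g s := by
        rw [← hsplit]
        linarith
end

section
/- For every T > 0 there exist constants a > 0 and b > 0 such that for all t ∈ (0,T] and all x, y ∈ [0,1], the Dirichlet heat kernel satisfies the Gaussian upper bound |H_t(x,y)| ≤ a t^{−1/2} exp(−b (x−y)²/t). -/
open MeasureTheory Real

theorem my_summable_exp_neg_int_sq (c : ℝ) (hc : 0 < c) :
    Summable fun n : ℤ => Real.exp (-(n:ℝ)^2 * c) := by
  apply Summable.of_nat_of_neg <;>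
  · apply Summable.of_nonneg_of_le (f := fun n : ℕ => Real.exp (-c) ^ n)
      (fun n => (Real.exp_pos _).le)
    · intro n
      rw [← Real.exp_nat_mul]
      apply Real.exp_le_exp.mpr
      have h : (0:ℝ) ≤ (n:ℝ) * ((n:ℝ) - 1) := by
        rcases Nat.eq_zero_or_pos n with h|h
        · simp [h]
        · have : (1:ℝ) ≤ n := by exact_mod_cast h
          nlinarith
      push_cast
      nlinarith [mul_nonneg hc.le h]
    · exact summable_geometric_of_lt_one (Real.exp_pos _).le
        (Real.exp_lt_one_iff.mpr (by linarith))

theorem my_exp_bound (t T u d m : ℝ) (ht : 0 < t) (htT : t ≤ T)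
    (hu1 : d^2 ≤ u^2) (hu2 : m^2 - 2 ≤ u^2) :
    Real.exp (-u^2/(4*t)) ≤
      Real.exp (1/(4*T)) * Real.exp (-m^2 * (1/(8*T))) * Real.exp (-d^2/(8*t)) := by
  have hT : 0 < T := lt_of_lt_of_le ht htT
  rw [← Real.exp_add, ← Real.exp_add]
  apply Real.exp_le_exp.mpr
  have h1 : d^2/(8*t) ≤ u^2/(8*t) := by gcongr
  have h2 : (m^2 - 2)/(8*T) ≤ u^2/(8*T) := by gcongr
  have h3 : u^2/(8*T) ≤ u^2/(8*t) := by
    apply div_le_div_of_nonneg_left (sq_nonneg u) (by positivity) (by linarith)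
  have e1 : u^2/(4*t) = u^2/(8*t) + u^2/(8*t) := by ring
  have e2 : (m^2-2)/(8*T) = m^2*(1/(8*T)) - 1/(4*T) := by ring
  have : u^2/(4*t) ≥ d^2/(8*t) + (m^2-2)/(8*T) := by linarith
  rw [e2] at this
  rw [neg_div, neg_div, neg_mul]
  linarith

theorem my_geom1 (x y : ℝ) (n : ℤ) (hx : x ∈ Set.Icc (0:ℝ) 1) (hy : y ∈ Set.Icc (0:ℝ) 1) :
    (x-y)^2 ≤ (y - x - 2*(n:ℝ))^2 := by
  obtain ⟨hx0, hx1⟩ := hx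
  obtain ⟨hy0, hy1⟩ := hy
  rcases eq_or_ne n 0 with rfl | hn
  · simp; nlinarith
  · have h1 : (1:ℤ) ≤ n^2 := by
      have := Int.one_le_abs (show n ≠ 0 from hn)
      nlinarith [abs_nonneg n, sq_abs n]
    have hm : (1:ℝ) ≤ (n:ℝ)^2 := by exact_mod_cast h1
    nlinarith [sq_nonneg ((n:ℝ) - (y - x)), sq_nonneg ((n:ℝ) + (y - x))]

theorem my_geom2 (x y : ℝ) (n : ℤ) (hx : x ∈ Set.Icc (0:ℝ) 1) (hy : y ∈ Set.Icc (0:ℝ) 1) :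
    (n:ℝ)^2 - 2 ≤ (y - x - 2*(n:ℝ))^2 := by
  obtain ⟨hx0, hx1⟩ := hx
  obtain ⟨hy0, hy1⟩ := hy
  nlinarith [sq_nonneg (3*(n:ℝ) - 2*(y - x))]

theorem my_geom3 (x y : ℝ) (n : ℤ) (hx : x ∈ Set.Icc (0:ℝ) 1) (hy : y ∈ Set.Icc (0:ℝ) 1) :
    (x-y)^2 ≤ (y + x - 2*(n:ℝ))^2 := by
  obtain ⟨hx0, hx1⟩ := hx
  obtain ⟨hy0, hy1⟩ := hy
  rcases le_or_gt n 0 with h | h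
  · have hm : (n:ℝ) ≤ 0 := by exact_mod_cast h
    nlinarith [mul_nonneg (by linarith : (0:ℝ) ≤ x - n) (by linarith : (0:ℝ) ≤ y - n)]
  · have hm : (1:ℝ) ≤ (n:ℝ) := by exact_mod_cast h
    nlinarith [mul_nonneg (by linarith : (0:ℝ) ≤ (n:ℝ) - x) (by linarith : (0:ℝ) ≤ (n:ℝ) - y)]

theorem my_geom4 (x y : ℝ) (n : ℤ) (hx : x ∈ Set.Icc (0:ℝ) 1) (hy : y ∈ Set.Icc (0:ℝ) 1) :
    (n:ℝ)^2 - 2 ≤ (y + x - 2*(n:ℝ))^2 := by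
  obtain ⟨hx0, hx1⟩ := hx
  obtain ⟨hy0, hy1⟩ := hy
  nlinarith [sq_nonneg (3*(n:ℝ) - 2*(y + x))]

/-- For every `T > 0` there are `a, b > 0` such that for all `t ∈ (0,T]` and
`x, y ∈ [0,1]`, `|H_t(x,y)| ≤ a t^{-1/2} exp(-b (x-y)²/t)`. -/
theorem dirichlet_heat_kernel_gaussian_upper_bound :
    ∀ T : ℝ, 0 < T →
      ∃ a : ℝ, 0 < a ∧ ∃ b : ℝ, 0 < b ∧
        ∀ t ∈ Set.Ioc (0 : ℝ) T, ∀ x ∈ Set.Icc (0 : ℝ) 1, ∀ y ∈ Set.Icc (0 : ℝ) 1,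
          |dirichletHeatKernel t x y| ≤
            a * t ^ (-(1 / 2) : ℝ) * Real.exp (-b * (x - y) ^ 2 / t) := by
  intro T hT
  have hc : 0 < 1/(8*T) := by positivity
  have hS : Summable fun n : ℤ => Real.exp (-(n:ℝ)^2 * (1/(8*T))) :=
    my_summable_exp_neg_int_sq _ hc
  set S : ℝ := ∑' n : ℤ, Real.exp (-(n:ℝ)^2 * (1/(8*T))) with hSdef
  have hS0 : 0 < S := Summable.tsum_pos hS (fun i => (Real.exp_pos _).le) 0 (Real.exp_pos _)
  refine ⟨(Real.sqrt (4*π))⁻¹ * (2 * Real.exp (1/(4*T)) * S), ?_, 1/8, by norm_num, ?_⟩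
  · have h4pi : 0 < Real.sqrt (4*π) := Real.sqrt_pos.mpr (by positivity)
    exact mul_pos (inv_pos.mpr h4pi) (by positivity)
  intro t ht x hx y hy
  obtain ⟨ht0, htT⟩ := ht
  set C1 : ℝ := Real.exp (1/(4*T)) with hC1def
  set E : ℝ := Real.exp (-(x-y)^2/(8*t)) with hEdef
  set f : ℤ → ℝ := fun n =>
    Real.exp (-((y - x - 2 * (n : ℝ)) ^ 2) / (4 * t)) -
      Real.exp (-((y + x - 2 * (n : ℝ)) ^ 2) / (4 * t)) with hfdef
  have hbound : ∀ n : ℤ, ‖f n‖ ≤ (2 * C1 * E) * Real.exp (-(n:ℝ)^2 * (1/(8*T))) := by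
    intro n
    have b1 := my_exp_bound t T (y - x - 2*(n:ℝ)) (x-y) (n:ℝ) ht0 htT
      (my_geom1 x y n hx hy) (my_geom2 x y n hx hy)
    have b2 := my_exp_bound t T (y + x - 2*(n:ℝ)) (x-y) (n:ℝ) ht0 htT
      (my_geom3 x y n hx hy) (my_geom4 x y n hx hy)
    have habs : ‖f n‖ ≤ Real.exp (-((y - x - 2 * (n : ℝ)) ^ 2) / (4 * t)) +
        Real.exp (-((y + x - 2 * (n : ℝ)) ^ 2) / (4 * t)) := by
      rw [Real.norm_eq_abs, hfdef]
      exact (abs_sub _ _).trans (by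
        rw [abs_of_pos (Real.exp_pos _), abs_of_pos (Real.exp_pos _)])
    calc ‖f n‖ ≤ _ + _ := habs
      _ ≤ C1 * Real.exp (-(n:ℝ)^2 * (1/(8*T))) * E +
          C1 * Real.exp (-(n:ℝ)^2 * (1/(8*T))) * E := add_le_add b1 b2
      _ = (2 * C1 * E) * Real.exp (-(n:ℝ)^2 * (1/(8*T))) := by ring
  have hgsum : Summable fun n : ℤ => (2 * C1 * E) * Real.exp (-(n:ℝ)^2 * (1/(8*T))) :=
    hS.mul_left _
  have htsum : ‖∑' n : ℤ, f n‖ ≤ (2 * C1 * E) * S := by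
    have := tsum_of_norm_bounded hgsum.hasSum hbound
    rwa [tsum_mul_left] at this
  have hH : |dirichletHeatKernel t x y| = (Real.sqrt (4*π*t))⁻¹ * |∑' n : ℤ, f n| := by
    rw [dirichletHeatKernel, abs_mul, abs_inv, abs_of_nonneg (Real.sqrt_nonneg _)]
  have hsqrt : (Real.sqrt (4*π*t))⁻¹ = (Real.sqrt (4*π))⁻¹ * t ^ (-(1/2) : ℝ) := by
    rw [show (4*π*t) = (4*π)*t by ring, Real.sqrt_mul (by positivity), mul_inv,
      Real.rpow_neg ht0.le, ← Real.sqrt_eq_rpow]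
  have hE : E = Real.exp (-(1/8) * (x - y)^2 / t) := by
    rw [hEdef]; congr 1; ring
  rw [hH, hsqrt, ← hE]
  calc (Real.sqrt (4*π))⁻¹ * t ^ (-(1/2) : ℝ) * |∑' n : ℤ, f n|
      ≤ (Real.sqrt (4*π))⁻¹ * t ^ (-(1/2) : ℝ) * ((2 * C1 * E) * S) := by
        apply mul_le_mul_of_nonneg_left (by simpa using htsum)
        positivity
    _ = (Real.sqrt (4*π))⁻¹ * (2 * C1 * S) * t ^ (-(1/2) : ℝ) * E := by ring
end

section
/- For every T > 0 there exist constants a > 0 and b > 0 such that for all t ∈ (0,T] and all x, y ∈ [0,1], the spatial derivative of the Dirichlet heat kernel satisfies |∂_y H_t(x,y)| ≤ a t^{−1} exp(−b (x−y)²/t). -/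
open MeasureTheory Real

/-- Auxiliary summable majorant family. -/
noncomputable def dhkAux (T : ℝ) (n : ℤ) : ℝ :=
  if n.natAbs ≤ 2 then 1 else Real.exp (-(2 * (n : ℝ) ^ 2 - 9) / (32 * T))

lemma dhkAux_pos (T : ℝ) (n : ℤ) : 0 < dhkAux T n := by
  unfold dhkAux; split
  · norm_num
  · exact Real.exp_pos _

lemma int_abs_le_sq (n : ℤ) : |(n : ℝ)| ≤ (n : ℝ) ^ 2 := by
  rcases eq_or_ne n 0 with h | h
  · simp [h]
  · have h1 : (1 : ℝ) ≤ |(n : ℝ)| := by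
      rw [← Int.cast_abs]
      exact_mod_cast Int.one_le_abs h
    nlinarith [sq_abs (n : ℝ), abs_nonneg (n : ℝ)]

lemma natAbs_cast_eq_abs (n : ℤ) : ((n.natAbs : ℝ)) = |(n : ℝ)| := by
  simp [Nat.cast_natAbs]

lemma nine_le_sq (n : ℤ) (h : ¬ n.natAbs ≤ 2) : (9 : ℝ) ≤ (n : ℝ) ^ 2 := by
  have h3 : (3 : ℝ) ≤ (n.natAbs : ℝ) := by exact_mod_cast Nat.le_of_lt_succ (by omega)
  rw [natAbs_cast_eq_abs] at h3
  nlinarith [sq_abs (n : ℝ)]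

lemma dhkAux_le (T : ℝ) (hT : 0 < T) (n : ℤ) :
    dhkAux T n ≤ Real.exp (9 / (32 * T)) * Real.exp (-(1 / (16 * T))) ^ n.natAbs := by
  have h32 : (0:ℝ) < 32 * T := by linarith
  rw [← Real.exp_nat_mul, ← Real.exp_add]
  unfold dhkAux
  split
  · rename_i h
    have hn2 : ((n.natAbs : ℝ)) ≤ 2 := by exact_mod_cast h
    have hn0 : (0:ℝ) ≤ (n.natAbs : ℝ) := by positivity
    apply Real.one_le_exp
    have e3 : 9 / (32 * T) + (n.natAbs : ℝ) * -(1 / (16 * T))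
        = (9 - 2 * (n.natAbs : ℝ)) / (32 * T) := by field_simp; ring
    rw [e3]
    apply div_nonneg (by linarith) (by linarith)
  · rename_i h
    apply Real.exp_le_exp.2
    have h1 : |(n : ℝ)| ≤ (n : ℝ) ^ 2 := int_abs_le_sq n
    have e3 : 9 / (32 * T) + (n.natAbs : ℝ) * -(1 / (16 * T))
        = (9 - 2 * (n.natAbs : ℝ)) / (32 * T) := by field_simp; ring
    rw [e3, natAbs_cast_eq_abs, div_le_div_iff₀ h32 h32]
    nlinarith

lemma summable_dhkAux (T : ℝ) (hT : 0 < T) : Summable (dhkAux T) := by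
  have hr : |Real.exp (-(1 / (16 * T)))| < 1 := by
    rw [abs_of_pos (Real.exp_pos _)]
    apply Real.exp_lt_one_iff.2
    simp only [Left.neg_neg_iff]
    positivity
  have hgeo : Summable (fun n : ℤ =>
      Real.exp (9 / (32 * T)) * Real.exp (-(1 / (16 * T))) ^ n.natAbs) := by
    apply Summable.mul_left
    apply Summable.of_nat_of_neg
    · simpa using summable_geometric_of_abs_lt_one hr
    · simpa using summable_geometric_of_abs_lt_one hr
  exact Summable.of_nonneg_of_le (fun n => (dhkAux_pos T n).le)
    (fun n => dhkAux_le T hT n) hgeo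

lemma abs_mul_exp_le (t w : ℝ) (ht : 0 < t) :
    |w| * Real.exp (-w ^ 2 / (4 * t)) ≤ 2 * Real.sqrt t * Real.exp (-w ^ 2 / (8 * t)) := by
  have hst : 0 < Real.sqrt t := Real.sqrt_pos.2 ht
  have key : w ^ 2 * Real.exp (-w ^ 2 / (4 * t)) ≤ 4 * t := by
    have h1 : w ^ 2 / (4 * t) ≤ Real.exp (w ^ 2 / (4 * t)) := by
      linarith [Real.add_one_le_exp (w ^ 2 / (4 * t))]
    have h2 : w ^ 2 ≤ 4 * t * Real.exp (w ^ 2 / (4 * t)) := by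
      rw [div_le_iff₀ (by positivity)] at h1; linarith
    have hprod : Real.exp (-w ^ 2 / (4 * t)) * Real.exp (w ^ 2 / (4 * t)) = 1 := by
      rw [← Real.exp_add]; ring_nf; exact Real.exp_zero
    nlinarith [Real.exp_pos (-w ^ 2 / (4 * t)), Real.exp_pos (w ^ 2 / (4 * t)),
      mul_le_mul_of_nonneg_right h2 (Real.exp_pos (-w ^ 2 / (4 * t))).le]
  have main : |w| * Real.exp (-w ^ 2 / (8 * t)) ≤ 2 * Real.sqrt t := by
    apply le_of_pow_le_pow_left₀ two_ne_zero (by positivity)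
    have hexp2 : Real.exp (-w ^ 2 / (8 * t)) ^ 2 = Real.exp (-w ^ 2 / (4 * t)) := by
      rw [sq, ← Real.exp_add]
      congr 1
      field_simp
      ring
    rw [mul_pow, sq_abs, hexp2, mul_pow, Real.sq_sqrt ht.le]
    nlinarith [key]
  calc |w| * Real.exp (-w ^ 2 / (4 * t))
      = (|w| * Real.exp (-w ^ 2 / (8 * t))) * Real.exp (-w ^ 2 / (8 * t)) := by
        rw [mul_assoc, ← Real.exp_add]
        congr 2
        field_simp
        ring
    _ ≤ 2 * Real.sqrt t * Real.exp (-w ^ 2 / (8 * t)) :=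
        mul_le_mul_of_nonneg_right main (Real.exp_pos _).le

lemma exp_le_dhkAux (T t w : ℝ) (n : ℤ) (ht : 0 < t) (htT : t ≤ T)
    (hn : 2 * (n:ℝ) ^ 2 - 9 ≤ w ^ 2) :
    Real.exp (-w ^ 2 / (4 * t)) ≤ dhkAux T n := by
  unfold dhkAux
  split
  · apply Real.exp_le_one_iff.2
    apply div_nonpos_of_nonpos_of_nonneg (by nlinarith [sq_nonneg w]) (by linarith)
  · rename_i h
    apply Real.exp_le_exp.2
    have h9 : (9:ℝ) ≤ (n : ℝ) ^ 2 := nine_le_sq n h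
    have hB : (0:ℝ) ≤ 2 * (n:ℝ) ^ 2 - 9 := by linarith
    have h1 : (2 * (n:ℝ) ^ 2 - 9) / (32 * T) ≤ w ^ 2 / (4 * t) :=
      div_le_div₀ (sq_nonneg w) hn (by linarith) (by linarith)
    rw [neg_div, neg_div, neg_le_neg_iff]
    exact h1

lemma sq_le_direct (s : ℝ) (n : ℤ) (hs : |s| ≤ 1) : s ^ 2 ≤ (s - 2 * (n:ℝ)) ^ 2 := by
  have h1 := abs_le.1 hs
  rcases lt_trichotomy n 0 with h | h | h
  · have hn : (n:ℝ) ≤ -1 := by exact_mod_cast (by omega : n ≤ -1)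
    nlinarith
  · simp [h]
  · have hn : (1:ℝ) ≤ (n:ℝ) := by exact_mod_cast h
    nlinarith

lemma sq_le_refl (x z : ℝ) (n : ℤ) (hx0 : 0 ≤ x) (hx1 : x ≤ 1) (hz0 : 0 ≤ z) (hz1 : z ≤ 1) :
    (x - z) ^ 2 ≤ (z + x - 2 * (n:ℝ)) ^ 2 := by
  rcases le_or_gt n 0 with h | h
  · have hn : (n:ℝ) ≤ 0 := by exact_mod_cast h
    nlinarith [mul_nonneg (by linarith : (0:ℝ) ≤ z - n) (by linarith : (0:ℝ) ≤ x - n)]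
  · have hn : (1:ℝ) ≤ (n:ℝ) := by exact_mod_cast h
    nlinarith [mul_nonneg (by linarith : (0:ℝ) ≤ (n:ℝ) - z) (by linarith : (0:ℝ) ≤ (n:ℝ) - x)]

lemma two_sq_le (p : ℝ) (n : ℤ) (hp : |p| ≤ 3) : 2 * (n:ℝ) ^ 2 - 9 ≤ (p - 2 * (n:ℝ)) ^ 2 := by
  have h1 := abs_le.1 hp
  nlinarith [sq_nonneg (p - (n:ℝ))]

lemma one_term (T t w A : ℝ) (n : ℤ) (ht : 0 < t) (htT : t ≤ T) (hA0 : 0 ≤ A)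
    (hAw : A ≤ w ^ 2) (hn : 2 * (n:ℝ) ^ 2 - 9 ≤ w ^ 2) :
    |Real.exp (-w ^ 2 / (4 * t)) * (-(2 * w) / (4 * t))| ≤
      (Real.sqrt t)⁻¹ * (Real.exp (-A / (32 * t)) * dhkAux T n) := by
  have h2t : (0:ℝ) < 2 * t := by linarith
  have hst : 0 < Real.sqrt t := Real.sqrt_pos.2 ht
  have hts : Real.sqrt t * Real.sqrt t = t := Real.mul_self_sqrt ht.le
  have habs : |Real.exp (-w ^ 2 / (4 * t)) * (-(2 * w) / (4 * t))|
      = |w| * Real.exp (-w ^ 2 / (4 * t)) / (2 * t) := by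
    rw [abs_mul, abs_of_pos (Real.exp_pos _), abs_div, abs_neg, abs_of_pos (by linarith : (0:ℝ) < 4 * t),
      abs_mul]
    rw [show |(2:ℝ)| = 2 by norm_num]
    field_simp
    ring
  have hexp : Real.exp (-w ^ 2 / (8 * t)) ≤ Real.exp (-A / (32 * t)) * dhkAux T n := by
    unfold dhkAux
    split
    · rw [mul_one, Real.exp_le_exp, div_le_div_iff₀ (by linarith) (by linarith)]
      nlinarith [sq_nonneg w]
    · rename_i h
      rw [← Real.exp_add, Real.exp_le_exp]
      have h9 : (9:ℝ) ≤ (n : ℝ) ^ 2 := nine_le_sq n h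
      have hB : (0:ℝ) ≤ 2 * (n:ℝ) ^ 2 - 9 := by linarith
      have hTt : (2 * (n:ℝ) ^ 2 - 9) / (32 * T) ≤ (2 * (n:ℝ) ^ 2 - 9) / (32 * t) :=
        div_le_div_of_nonneg_left hB (by linarith) (by linarith)
      have hkey : -w ^ 2 / (8 * t) ≤ -A / (32 * t) + -(2 * (n:ℝ) ^ 2 - 9) / (32 * t) := by
        rw [neg_div, neg_div, neg_div, ← neg_add, neg_le_neg_iff, ← add_div,
          div_le_div_iff₀ (by linarith) (by linarith)]
        nlinarith
      have : -(2 * (n:ℝ) ^ 2 - 9) / (32 * t) ≤ -(2 * (n:ℝ) ^ 2 - 9) / (32 * T) := by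
        rw [neg_div, neg_div, neg_le_neg_iff]; exact hTt
      linarith
  calc |Real.exp (-w ^ 2 / (4 * t)) * (-(2 * w) / (4 * t))|
      = |w| * Real.exp (-w ^ 2 / (4 * t)) / (2 * t) := habs
    _ ≤ 2 * Real.sqrt t * Real.exp (-w ^ 2 / (8 * t)) / (2 * t) :=
        (div_le_div_iff_of_pos_right h2t).2 (abs_mul_exp_le t w ht)
    _ = (Real.sqrt t)⁻¹ * Real.exp (-w ^ 2 / (8 * t)) := by
        field_simp
        linear_combination hts
    _ ≤ (Real.sqrt t)⁻¹ * (Real.exp (-A / (32 * t)) * dhkAux T n) :=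
        mul_le_mul_of_nonneg_left hexp (by positivity)

/-- For every `T > 0` there are `a, b > 0` such that for all `t ∈ (0,T]` and
`x, y ∈ [0,1]`, `|∂_y H_t(x,y)| ≤ a t⁻¹ exp(-b (x-y)²/t)`. -/
theorem deriv_dirichlet_heat_kernel_gaussian_upper_bound :
    ∀ T : ℝ, 0 < T →
      ∃ a : ℝ, 0 < a ∧ ∃ b : ℝ, 0 < b ∧
        ∀ t ∈ Set.Ioc (0 : ℝ) T, ∀ x ∈ Set.Icc (0 : ℝ) 1, ∀ y ∈ Set.Icc (0 : ℝ) 1,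
          |deriv (fun z : ℝ => dirichletHeatKernel t x z) y| ≤
            a * t⁻¹ * Real.exp (-b * (x - y) ^ 2 / t) := by
  intro T hT
  refine ⟨∑' n : ℤ, dhkAux T n,
    Summable.tsum_pos (summable_dhkAux T hT) (fun n => (dhkAux_pos T n).le) 0 (dhkAux_pos T 0),
    1/32, by norm_num, ?_⟩
  rintro t ⟨ht0, htT⟩ x ⟨hx0, hx1⟩ y ⟨hy0, hy1⟩
  have hst : 0 < Real.sqrt t := Real.sqrt_pos.2 ht0
  have hts : Real.sqrt t * Real.sqrt t = t := Real.mul_self_sqrt ht0.le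
  set S : ℝ := ∑' n : ℤ, dhkAux T n with hS_def
  set g : ℤ → ℝ → ℝ := fun n z =>
    Real.exp (-((z - x - 2 * (n:ℝ)) ^ 2) / (4 * t)) -
      Real.exp (-((z + x - 2 * (n:ℝ)) ^ 2) / (4 * t)) with hg_def
  set g' : ℤ → ℝ → ℝ := fun n z =>
    Real.exp (-((z - x - 2 * (n:ℝ)) ^ 2) / (4 * t)) * (-(2 * (z - x - 2 * (n:ℝ))) / (4 * t)) -
      Real.exp (-((z + x - 2 * (n:ℝ)) ^ 2) / (4 * t)) * (-(2 * (z + x - 2 * (n:ℝ))) / (4 * t))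
    with hg'_def
  -- differentiability of each term
  have hderiv : ∀ (n : ℤ) (z : ℝ), HasDerivAt (g n) (g' n z) z := by
    intro n z
    have hd1 : HasDerivAt (fun w : ℝ => Real.exp (-((w - x - 2 * (n:ℝ)) ^ 2) / (4 * t)))
        (Real.exp (-((z - x - 2 * (n:ℝ)) ^ 2) / (4 * t)) * (-(2 * (z - x - 2 * (n:ℝ))) / (4 * t)))
        z := by
      have h2 := ((((hasDerivAt_id z).sub_const x).sub_const (2 * (n:ℝ))).pow 2).neg.div_const
        (4 * t)
      have h4 := h2.exp
      simp only [id_eq] at h4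
      convert h4 using 1
      · rfl
      change _ = Real.exp (-((z - x - 2 * (n:ℝ)) ^ 2) / (4 * t)) * _
      ring
    have hd2 : HasDerivAt (fun w : ℝ => Real.exp (-((w + x - 2 * (n:ℝ)) ^ 2) / (4 * t)))
        (Real.exp (-((z + x - 2 * (n:ℝ)) ^ 2) / (4 * t)) * (-(2 * (z + x - 2 * (n:ℝ))) / (4 * t)))
        z := by
      have h2 := ((((hasDerivAt_id z).add_const x).sub_const (2 * (n:ℝ))).pow 2).neg.div_const
        (4 * t)
      have h4 := h2.exp
      simp only [id_eq] at h4
      convert h4 using 1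
      · rfl
      change _ = Real.exp (-((z + x - 2 * (n:ℝ)) ^ 2) / (4 * t)) * _
      ring
    exact hd1.sub hd2
  -- summability at y
  have hsum_y : Summable fun n : ℤ => g n y := by
    apply Summable.of_norm_bounded ((summable_dhkAux T hT).mul_left 2)
    intro n
    have e1 : Real.exp (-(y - x - 2 * (n:ℝ)) ^ 2 / (4 * t)) ≤ dhkAux T n :=
      exp_le_dhkAux T t _ n ht0 htT (two_sq_le (y - x) n (by rw [abs_le]; constructor <;> linarith))
    have e2 : Real.exp (-(y + x - 2 * (n:ℝ)) ^ 2 / (4 * t)) ≤ dhkAux T n :=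
      exp_le_dhkAux T t _ n ht0 htT (two_sq_le (y + x) n (by rw [abs_le]; constructor <;> linarith))
    calc ‖g n y‖ ≤ ‖Real.exp (-((y - x - 2 * (n:ℝ)) ^ 2) / (4 * t))‖ +
          ‖Real.exp (-((y + x - 2 * (n:ℝ)) ^ 2) / (4 * t))‖ := norm_sub_le _ _
      _ ≤ 2 * dhkAux T n := by
          rw [Real.norm_eq_abs, Real.norm_eq_abs, abs_of_pos (Real.exp_pos _),
            abs_of_pos (Real.exp_pos _)]
          have := e1; have := e2
          linarith [e1, e2]
  -- uniform derivative bound on Ioo (-1) 2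
  have hbound : ∀ (n : ℤ) (z : ℝ), z ∈ Set.Ioo (-1 : ℝ) 2 →
      ‖g' n z‖ ≤ (Real.sqrt t)⁻¹ * (2 * dhkAux T n) := by
    intro n z hz
    obtain ⟨hz1, hz2⟩ := hz
    have e1 := one_term T t (z - x - 2 * (n:ℝ)) 0 n ht0 htT le_rfl (sq_nonneg _)
      (two_sq_le (z - x) n (by rw [abs_le]; constructor <;> linarith))
    have e2 := one_term T t (z + x - 2 * (n:ℝ)) 0 n ht0 htT le_rfl (sq_nonneg _)
      (two_sq_le (z + x) n (by rw [abs_le]; constructor <;> linarith))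
    have hE0 : Real.exp (-(0:ℝ) / (32 * t)) = 1 := by norm_num
    rw [hE0, one_mul] at e1 e2
    calc ‖g' n z‖ ≤ |Real.exp (-((z - x - 2 * (n:ℝ)) ^ 2) / (4 * t)) *
            (-(2 * (z - x - 2 * (n:ℝ))) / (4 * t))| +
          |Real.exp (-((z + x - 2 * (n:ℝ)) ^ 2) / (4 * t)) *
            (-(2 * (z + x - 2 * (n:ℝ))) / (4 * t))| := norm_sub_le _ _
      _ ≤ (Real.sqrt t)⁻¹ * (2 * dhkAux T n) := by
          have := mul_pos hst (dhkAux_pos T n)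
          rw [mul_comm (2:ℝ) (dhkAux T n), ← mul_assoc]
          calc _ ≤ (Real.sqrt t)⁻¹ * dhkAux T n + (Real.sqrt t)⁻¹ * dhkAux T n := by
                exact add_le_add e1 e2
            _ = (Real.sqrt t)⁻¹ * dhkAux T n * 2 := by ring
  -- derivative of the series
  have hy' : y ∈ Set.Ioo (-1 : ℝ) 2 := ⟨by linarith, by linarith⟩
  have HD : HasDerivAt (fun z => ∑' n : ℤ, g n z) (∑' n : ℤ, g' n y) y :=
    hasDerivAt_tsum_of_isPreconnected
      (((summable_dhkAux T hT).mul_left 2).mul_left (Real.sqrt t)⁻¹)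
      isOpen_Ioo ((convex_Ioo (-1 : ℝ) 2).isPreconnected)
      (fun n z _ => hderiv n z) hbound hy' hsum_y hy'
  have hfun : (fun z : ℝ => dirichletHeatKernel t x z)
      = fun z => (Real.sqrt (4 * π * t))⁻¹ * ∑' n : ℤ, g n z := rfl
  have HDK : HasDerivAt (fun z : ℝ => dirichletHeatKernel t x z)
      ((Real.sqrt (4 * π * t))⁻¹ * ∑' n : ℤ, g' n y) y := by
    rw [hfun]; exact HD.const_mul _
  rw [HDK.deriv]
  -- pointwise bound on g' n y
  set E : ℝ := Real.exp (-(x - y) ^ 2 / (32 * t)) with hE_def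
  have hterm : ∀ n : ℤ, ‖g' n y‖ ≤ (Real.sqrt t)⁻¹ * (E * (2 * dhkAux T n)) := by
    intro n
    have hxy : (x - y) ^ 2 = (y - x) ^ 2 := by ring
    have e1 := one_term T t (y - x - 2 * (n:ℝ)) ((x - y) ^ 2) n ht0 htT (sq_nonneg _)
      (by rw [hxy]; exact sq_le_direct (y - x) n (by rw [abs_le]; constructor <;> linarith))
      (two_sq_le (y - x) n (by rw [abs_le]; constructor <;> linarith))
    have e2 := one_term T t (y + x - 2 * (n:ℝ)) ((x - y) ^ 2) n ht0 htT (sq_nonneg _)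
      (sq_le_refl x y n hx0 hx1 hy0 hy1)
      (two_sq_le (y + x) n (by rw [abs_le]; constructor <;> linarith))
    calc ‖g' n y‖ ≤ |Real.exp (-((y - x - 2 * (n:ℝ)) ^ 2) / (4 * t)) *
            (-(2 * (y - x - 2 * (n:ℝ))) / (4 * t))| +
          |Real.exp (-((y + x - 2 * (n:ℝ)) ^ 2) / (4 * t)) *
            (-(2 * (y + x - 2 * (n:ℝ))) / (4 * t))| := norm_sub_le _ _
      _ ≤ (Real.sqrt t)⁻¹ * (E * (2 * dhkAux T n)) := by
          have h := add_le_add e1 e2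
          calc _ ≤ (Real.sqrt t)⁻¹ * (E * dhkAux T n) + (Real.sqrt t)⁻¹ * (E * dhkAux T n) := h
            _ = (Real.sqrt t)⁻¹ * (E * (2 * dhkAux T n)) := by ring
  have hsum_bound : Summable fun n : ℤ => (Real.sqrt t)⁻¹ * (E * (2 * dhkAux T n)) :=
    (((summable_dhkAux T hT).mul_left 2).mul_left E).mul_left (Real.sqrt t)⁻¹
  have hsum_norm : Summable fun n : ℤ => ‖g' n y‖ :=
    Summable.of_nonneg_of_le (fun n => norm_nonneg _) hterm hsum_bound
  -- assemble
  have hC : (Real.sqrt (4 * π * t))⁻¹ ≤ (2 * Real.sqrt t)⁻¹ := by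
    apply inv_anti₀ (by positivity)
    have h1 : (4 : ℝ) * t ≤ 4 * π * t := by nlinarith [Real.pi_gt_three]
    have h2 : Real.sqrt (4 * t) = 2 * Real.sqrt t := by
      rw [show (4:ℝ) * t = 2 ^ 2 * t by ring, Real.sqrt_mul (by positivity),
        Real.sqrt_sq (by norm_num : (0:ℝ) ≤ 2)]
    rw [← h2]
    exact Real.sqrt_le_sqrt h1
  have hCpos : (0:ℝ) < (Real.sqrt (4 * π * t))⁻¹ := by
    have : (0:ℝ) < 4 * π * t := by positivity
    positivity
  have htsum_le : ‖∑' n : ℤ, g' n y‖ ≤ (Real.sqrt t)⁻¹ * (E * (2 * S)) := by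
    calc ‖∑' n : ℤ, g' n y‖ ≤ ∑' n : ℤ, ‖g' n y‖ := norm_tsum_le_tsum_norm hsum_norm
      _ ≤ ∑' n : ℤ, (Real.sqrt t)⁻¹ * (E * (2 * dhkAux T n)) :=
          Summable.tsum_le_tsum hterm hsum_norm hsum_bound
      _ = (Real.sqrt t)⁻¹ * (E * (2 * S)) := by
          rw [tsum_mul_left, tsum_mul_left, tsum_mul_left]
  have hSpos : 0 < S :=
    Summable.tsum_pos (summable_dhkAux T hT) (fun n => (dhkAux_pos T n).le) 0 (dhkAux_pos T 0)
  have hfinal : |(Real.sqrt (4 * π * t))⁻¹ * ∑' n : ℤ, g' n y| ≤ S * t⁻¹ * E := by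
    rw [abs_mul, abs_of_pos hCpos]
    calc (Real.sqrt (4 * π * t))⁻¹ * |∑' n : ℤ, g' n y|
        ≤ (2 * Real.sqrt t)⁻¹ * ((Real.sqrt t)⁻¹ * (E * (2 * S))) := by
          apply mul_le_mul hC ?_ (abs_nonneg _) (by positivity)
          rw [← Real.norm_eq_abs]; exact htsum_le
      _ = S * t⁻¹ * E := by
          field_simp
          linear_combination (-E) * hts
  have hEeq : Real.exp (-(1/32) * (x - y) ^ 2 / t) = E := by
    rw [hE_def]
    congr 1
    field_simp
  rw [hEeq]
  exact hfinal
end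

section
/- Let m ≥ 1 be an integer. There exists a constant C_m > 0, depending only on m, with the following property: if Z and N are independent real-valued random variables, N is Gaussian with mean 0 and variance v > 0, φ : ℝ → ℝ is bounded and measurable, and h ∈ ℝ, then |E[(Δ_h^m φ)(Z + N)]| ≤ C_m (sup_x |φ(x)|) (|h| / √v)^m. -/
open MeasureTheory Real ProbabilityTheory

open ENNReal

/-- The `m`-th finite difference of `f : ℝ → ℝ` at lag `h`:
`(Δ_h^m f)(x) = Σ_{j=0}^m (-1)^{m-j} C(m,j) f(x+jh)`. -/
noncomputable def finDiff (h : ℝ) (m : ℕ) (f : ℝ → ℝ) (x : ℝ) : ℝ :=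
  ∑ j ∈ Finset.range (m + 1), (-1 : ℝ) ^ (m - j) * (m.choose j : ℝ) * f (x + (j : ℝ) * h)

namespace FDEaux


lemma finDiff_eq (h : ℝ) (m : ℕ) (f : ℝ → ℝ) (x : ℝ) :
    finDiff h m f x
      = (-1 : ℝ) ^ m *
        ∑ j ∈ Finset.range (m + 1), (-1 : ℝ) ^ j * (m.choose j : ℝ) * f (x + (j : ℝ) * h) := by
  rw [finDiff, Finset.mul_sum]
  refine Finset.sum_congr rfl fun j hj => ?_
  have hj' : j ≤ m := Nat.lt_succ_iff.mp (Finset.mem_range.mp hj)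
  have h1 : ((-1 : ℝ) ^ j) * ((-1 : ℝ) ^ j) = 1 := by
    rw [← pow_add]; exact Even.neg_one_pow ⟨j, rfl⟩
  have h3 : (-1 : ℝ) ^ (m - j) = (-1) ^ m * (-1) ^ j := by
    rw [show (-1:ℝ)^m = (-1:ℝ)^(m-j) * (-1)^j from by rw [← pow_add, Nat.sub_add_cancel hj'],
      mul_assoc, h1, mul_one]
  rw [h3]; ring

lemma finDiff_zero (h : ℝ) (f : ℝ → ℝ) (x : ℝ) : finDiff h 0 f x = f x := by
  simp [finDiff]

lemma finDiff_succ (h : ℝ) (k : ℕ) (f : ℝ → ℝ) (x : ℝ) :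
    finDiff h (k + 1) f x = finDiff h k f (x + h) - finDiff h k f x := by
  have key : ∀ y : ℝ,
      ∑ j ∈ Finset.range (k + 2), (-1 : ℝ) ^ j * ((k+1).choose j : ℝ) * f (y + (j : ℝ) * h)
      = ∑ j ∈ Finset.range (k + 1), (-1 : ℝ) ^ j * (k.choose j : ℝ) * f (y + (j : ℝ) * h)
        - ∑ j ∈ Finset.range (k + 1), (-1 : ℝ) ^ j * (k.choose j : ℝ) * f ((y + h) + (j : ℝ) * h) := by
    intro y
    rw [Finset.sum_range_succ'
      (fun j => (-1 : ℝ) ^ j * ((k+1).choose j : ℝ) * f (y + (j : ℝ) * h)) (k+1)]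
    have hsplit : ∀ j ∈ Finset.range (k + 1),
        (-1 : ℝ) ^ (j+1) * ((k+1).choose (j+1) : ℝ) * f (y + ((j+1 : ℕ) : ℝ) * h)
        = -((-1 : ℝ) ^ j * (k.choose j : ℝ) * f ((y + h) + (j : ℝ) * h))
          + (-1 : ℝ) ^ (j+1) * (k.choose (j+1) : ℝ) * f (y + ((j+1 : ℕ) : ℝ) * h) := by
      intro j hj
      rw [Nat.choose_succ_succ]
      push_cast
      have hy : y + ((j : ℝ) + 1) * h = (y + h) + (j : ℝ) * h := by ring
      rw [hy]; ring
    rw [Finset.sum_congr rfl hsplit, Finset.sum_add_distrib]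
    have hS : ∑ j ∈ Finset.range (k + 1), (-1 : ℝ) ^ j * (k.choose j : ℝ) * f (y + (j : ℝ) * h)
        = (∑ j ∈ Finset.range k,
            (-1 : ℝ) ^ (j+1) * (k.choose (j+1) : ℝ) * f (y + ((j+1 : ℕ) : ℝ) * h)) + f y := by
      rw [Finset.sum_range_succ'
        (fun j => (-1 : ℝ) ^ j * (k.choose j : ℝ) * f (y + (j : ℝ) * h)) k]
      simp
    have hT : ∑ j ∈ Finset.range (k + 1),
          (-1 : ℝ) ^ (j+1) * (k.choose (j+1) : ℝ) * f (y + ((j+1 : ℕ) : ℝ) * h)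
        = ∑ j ∈ Finset.range k,
            (-1 : ℝ) ^ (j+1) * (k.choose (j+1) : ℝ) * f (y + ((j+1 : ℕ) : ℝ) * h) := by
      rw [Finset.sum_range_succ]
      simp [Nat.choose_succ_self]
    rw [Finset.sum_neg_distrib, hT, hS]
    simp only [Nat.cast_zero, pow_zero, Nat.choose_zero_right, Nat.cast_one, zero_mul, add_zero,
      one_mul, mul_one]
    ring
  rw [finDiff_eq, finDiff_eq, finDiff_eq, key x]
  ring


lemma lintegral_shift_abs_le {f f' : ℝ → ℝ} (hd : ∀ x, HasDerivAt f (f' x) x)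
    (hc : Continuous f') (hi' : Integrable f' volume) {a : ℝ} (ha : 0 ≤ a) :
    ∫⁻ x, ENNReal.ofReal |f (x + a) - f x|
      ≤ ENNReal.ofReal a * ∫⁻ t, ENNReal.ofReal |f' t| := by
  set g : ℝ → ℝ≥0∞ := fun t => ENNReal.ofReal |f' t| with hg
  have hgm : Measurable g := (hc.abs.measurable).ennreal_ofReal
  have pointwise : ∀ x, ENNReal.ofReal |f (x + a) - f x|
      ≤ ∫⁻ s in Set.Ioc 0 a, g (x + s) := by
    intro x
    have hle : x ≤ x + a := by linarith
    have ftc : ∫ t in x..(x+a), f' t = f (x+a) - f x :=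
      intervalIntegral.integral_eq_sub_of_hasDerivAt (fun t _ => hd t) hi'.intervalIntegrable
    have habs : |f (x + a) - f x| ≤ ∫ t in Set.Ioc x (x+a), |f' t| := by
      rw [← ftc, ← intervalIntegral.integral_of_le hle]
      exact (intervalIntegral.abs_integral_le_integral_abs hle)
    have heq1 : ENNReal.ofReal (∫ t in Set.Ioc x (x+a), |f' t|)
        = ∫⁻ t in Set.Ioc x (x+a), g t := by
      exact ofReal_integral_eq_lintegral_ofReal (hi'.abs.integrableOn)
        (ae_of_all _ fun t => abs_nonneg _)
    have heq2 : ∫⁻ t in Set.Ioc x (x+a), g t = ∫⁻ s in Set.Ioc 0 a, g (x + s) := by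
      have hmp : MeasurePreserving (fun s : ℝ => x + s) volume volume :=
        measurePreserving_add_left volume x
      have hemb : MeasurableEmbedding (fun s : ℝ => x + s) :=
        (MeasurableEquiv.addLeft x).measurableEmbedding
      have hpre : (fun s : ℝ => x + s) ⁻¹' Set.Ioc x (x+a) = Set.Ioc 0 a := by
        ext s; simp [Set.mem_Ioc]
      rw [← hpre, hmp.setLIntegral_comp_preimage_emb hemb]
    calc ENNReal.ofReal |f (x + a) - f x| ≤ ENNReal.ofReal (∫ t in Set.Ioc x (x+a), |f' t|) :=
          ENNReal.ofReal_le_ofReal habs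
      _ = _ := by rw [heq1, heq2]
  calc ∫⁻ x, ENNReal.ofReal |f (x + a) - f x|
      ≤ ∫⁻ x, ∫⁻ s in Set.Ioc 0 a, g (x + s) := lintegral_mono pointwise
    _ = ∫⁻ s in Set.Ioc 0 a, ∫⁻ x, g (x + s) := by
        refine lintegral_lintegral_swap ?_
        exact (hgm.comp measurable_add).aemeasurable
    _ = ∫⁻ s in Set.Ioc 0 a, ∫⁻ t, g t := by
        refine setLIntegral_congr_fun measurableSet_Ioc (fun s _ => ?_)
        exact lintegral_add_right_eq_self g s
    _ = ENNReal.ofReal a * ∫⁻ t, g t := by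
        rw [setLIntegral_const, Real.volume_Ioc, sub_zero, mul_comm]

lemma integral_shift_abs_le {f f' : ℝ → ℝ} (hd : ∀ x, HasDerivAt f (f' x) x)
    (hc : Continuous f') (hi' : Integrable f' volume) (hi : Integrable f volume) (a : ℝ) :
    ∫ x, |f (x + a) - f x| ≤ |a| * ∫ x, |f' x| := by
  have main : ∀ b : ℝ, 0 ≤ b → ∫ x, |f (x + b) - f x| ≤ b * ∫ x, |f' x| := by
    intro b hb
    have hint : Integrable (fun x => f (x + b) - f x) volume :=
      (hi.comp_add_right b).sub hi
    have h1 : ENNReal.ofReal (∫ x, |f (x + b) - f x|)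
        = ∫⁻ x, ENNReal.ofReal |f (x + b) - f x| :=
      ofReal_integral_eq_lintegral_ofReal hint.abs (ae_of_all _ fun x => abs_nonneg _)
    have h2 : ENNReal.ofReal (b * ∫ x, |f' x|)
        = ENNReal.ofReal b * ∫⁻ t, ENNReal.ofReal |f' t| := by
      rw [ENNReal.ofReal_mul hb,
        ofReal_integral_eq_lintegral_ofReal hi'.abs (ae_of_all _ fun x => abs_nonneg _)]
    have := lintegral_shift_abs_le hd hc hi' hb
    rw [← h1, ← h2] at this
    have hrhs : 0 ≤ b * ∫ x, |f' x| :=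
      mul_nonneg hb (integral_nonneg fun x => abs_nonneg _)
    exact (ENNReal.ofReal_le_ofReal_iff hrhs).mp this
  rcases le_total 0 a with ha | ha
  · rw [abs_of_nonneg ha]; exact main a ha
  · have hswap : ∫ x, |f (x + a) - f x| = ∫ x, |f (x + (-a)) - f x| := by
      calc ∫ x, |f (x + a) - f x|
          = ∫ x, (fun y => |f (y + a) - f y|) (x + (-a)) := by
            rw [integral_add_right_eq_self (fun y => |f (y + a) - f y|) (-a)]
        _ = ∫ x, |f (x + (-a)) - f x| := by
            congr 1; funext x
            show |f (x + -a + a) - f (x + -a)| = _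
            have h1 : x + -a + a = x := by ring
            rw [h1, abs_sub_comm]
    rw [hswap, abs_of_nonpos ha]
    exact main (-a) (by linarith)



lemma integrable_abspow_mul_exp_neg_mul_sq {b : ℝ} (hb : 0 < b) (n : ℕ) :
    Integrable fun x : ℝ => |x| ^ n * exp (-b * x ^ 2) := by
  have hmeas : Measurable fun x : ℝ => |x| ^ n * exp (-b * x ^ 2) := by fun_prop
  have hIoi : IntegrableOn (fun x : ℝ => |x| ^ n * exp (-b * x ^ 2)) (Set.Ioi 0) := by
    have := integrableOn_rpow_mul_exp_neg_mul_sq hb (s := (n : ℝ))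
      ((by norm_num : (-1:ℝ) < 0).trans_le (Nat.cast_nonneg n))
    refine this.congr_fun (fun x hx => ?_) measurableSet_Ioi
    beta_reduce; rw [Real.rpow_natCast, abs_of_pos (Set.mem_Ioi.mp hx)]
  have hIio : IntegrableOn (fun x : ℝ => |x| ^ n * exp (-b * x ^ 2)) (Set.Iio 0) := by
    have : IntegrableOn (fun x : ℝ => |(-x)| ^ n * exp (-b * (-x) ^ 2)) (Set.Ioi 0) := by
      refine hIoi.congr_fun (fun x _ => ?_) measurableSet_Ioi
      rw [abs_neg, neg_sq]
    have h2 := (Measure.measurePreserving_neg (volume : Measure ℝ)).integrableOn_comp_preimage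
      (Homeomorph.neg ℝ).measurableEmbedding (f := fun x : ℝ => |x| ^ n * exp (-b * x ^ 2))
      (s := Set.Iio 0)
    rw [← h2]
    simpa [Function.comp_def] using this
  rw [← integrableOn_univ, ← Set.Iio_union_Ici (a := (0:ℝ)), integrableOn_union,
    integrableOn_Ici_iff_integrableOn_Ioi]
  exact ⟨hIio, hIoi⟩

lemma integrable_poly_mul_gauss (p : Polynomial ℝ) {b : ℝ} (hb : 0 < b) :
    Integrable fun x : ℝ => Polynomial.aeval x p * exp (-b * x ^ 2) := by
  have hmeas : AEStronglyMeasurable (fun x : ℝ => Polynomial.aeval x p * exp (-b * x ^ 2))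
      volume := ((p.continuous_aeval).mul (by fun_prop)).aestronglyMeasurable
  set g : ℝ → ℝ := fun x =>
    ∑ i ∈ Finset.range (p.natDegree + 1), |p.coeff i| * (|x| ^ i * exp (-b * x ^ 2)) with hg
  have hgint : Integrable g volume := by
    refine integrable_finset_sum _ fun i _ => ?_
    exact (integrable_abspow_mul_exp_neg_mul_sq hb i).const_mul _
  refine Integrable.mono' hgint hmeas (ae_of_all _ fun x => ?_)
  rw [Real.norm_eq_abs, abs_mul, abs_of_pos (exp_pos _)]
  have : |Polynomial.aeval x p| ≤ ∑ i ∈ Finset.range (p.natDegree + 1), |p.coeff i| * |x| ^ i := by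
    have heval : Polynomial.aeval x p
        = ∑ i ∈ Finset.range (p.natDegree + 1), p.coeff i * x ^ i := by
      have hae : Polynomial.aeval x p = p.eval x := by
        simp [Polynomial.aeval_def, Polynomial.eval₂_eq_eval_map]
      rw [hae]
      exact Polynomial.eval_eq_sum_range (p := p) x
    rw [heval]
    refine (Finset.abs_sum_le_sum_abs _ _).trans ?_
    refine Finset.sum_le_sum fun i _ => ?_
    rw [abs_mul, abs_pow]
  calc |Polynomial.aeval x p| * exp (-b * x ^ 2)
      ≤ (∑ i ∈ Finset.range (p.natDegree + 1), |p.coeff i| * |x| ^ i) * exp (-b * x ^ 2) :=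
        mul_le_mul_of_nonneg_right this (exp_pos _).le
    _ = g x := by
        rw [hg, Finset.sum_mul]
        exact Finset.sum_congr rfl fun i _ => by ring


noncomputable def Pher (k : ℕ) (u : ℝ) : ℝ :=
  (-1 : ℝ) ^ k * (Polynomial.aeval u (Polynomial.hermite k)) * Real.exp (-(u ^ 2 / 2))

lemma hasDerivAt_Pher (k : ℕ) (u : ℝ) : HasDerivAt (Pher k) (Pher (k + 1) u) u := by
  have h1 : HasDerivAt (fun u : ℝ => -(u ^ 2 / 2)) (-u) u := by
    have h := ((hasDerivAt_pow 2 u).div_const 2).fun_neg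
    refine h.congr_deriv ?_
    norm_num
  have hexp : HasDerivAt (fun u : ℝ => Real.exp (-(u ^ 2 / 2)))
      (Real.exp (-(u ^ 2 / 2)) * (-u)) u := h1.exp
  have hp : HasDerivAt (fun u : ℝ => Polynomial.aeval u (Polynomial.hermite k))
      (Polynomial.aeval u (Polynomial.derivative (Polynomial.hermite k))) u :=
    (Polynomial.hermite k).hasDerivAt_aeval u
  have hprod := (hp.fun_mul hexp).const_mul ((-1 : ℝ) ^ k)
  have hfun : (fun u : ℝ => (-1:ℝ)^k * ((Polynomial.aeval u (Polynomial.hermite k))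
      * Real.exp (-(u ^ 2 / 2)))) = Pher k := by
    funext y; rw [Pher, mul_assoc]
  rw [hfun] at hprod
  refine hprod.congr_deriv ?_
  rw [Pher, Polynomial.hermite_succ, map_sub, map_mul, Polynomial.aeval_X, pow_succ]
  ring

lemma continuous_Pher (k : ℕ) : Continuous (Pher k) := by
  unfold Pher
  fun_prop

lemma integrable_Pher (k : ℕ) : Integrable (Pher k) volume := by
  have h := (integrable_poly_mul_gauss ((Polynomial.hermite k).map (algebraMap ℤ ℝ))
    (b := (1:ℝ)/2) (by norm_num)).const_mul ((-1 : ℝ) ^ k)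
  refine h.congr (ae_of_all _ fun u => ?_)
  have harg : -(1/2 : ℝ) * u ^ 2 = -(u ^ 2 / 2) := by ring
  show (-1:ℝ)^k * (Polynomial.aeval u _ * Real.exp (-(1/2:ℝ) * u ^ 2)) = Pher k u
  rw [harg, Polynomial.aeval_map_algebraMap, Pher, mul_assoc]

/-- scaled derivative chain: `Qg c σ k` is the k-th derivative of `x ↦ c · exp(-(x/σ)²/2)`. -/
noncomputable def Qg (c σ : ℝ) (k : ℕ) (x : ℝ) : ℝ := c * σ⁻¹ ^ k * Pher k (x / σ)

lemma hasDerivAt_Qg (c : ℝ) {σ : ℝ} (hσ : 0 < σ) (k : ℕ) (x : ℝ) :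
    HasDerivAt (Qg c σ k) (Qg c σ (k + 1) x) x := by
  have hin : HasDerivAt (fun x : ℝ => x / σ) σ⁻¹ x := by
    simpa using (hasDerivAt_id x).div_const σ
  have hcomp : HasDerivAt (fun x : ℝ => Pher k (x / σ)) (Pher (k+1) (x / σ) * σ⁻¹) x :=
    by have := (hasDerivAt_Pher k (x / σ)).comp x hin; exact this
  have := hcomp.const_mul (c * σ⁻¹ ^ k)
  refine this.congr_deriv ?_
  rw [Qg, pow_succ]
  ring

lemma continuous_Qg (c σ : ℝ) (k : ℕ) : Continuous (Qg c σ k) :=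
  continuous_const.mul ((continuous_Pher k).comp (continuous_id.div_const σ))

lemma integrable_Qg (c : ℝ) {σ : ℝ} (hσ : 0 < σ) (k : ℕ) : Integrable (Qg c σ k) volume :=
  ((integrable_Pher k).comp_div hσ.ne').const_mul _

lemma integral_abs_Qg {c σ : ℝ} (hc : 0 ≤ c) (hσ : 0 < σ) (k : ℕ) :
    ∫ x, |Qg c σ k x| = c * σ⁻¹ ^ k * σ * ∫ u, |Pher k u| := by
  have h1 : ∀ x, |Qg c σ k x| = (c * σ⁻¹ ^ k) * |Pher k (x / σ)| := by
    intro x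
    rw [Qg, abs_mul, abs_mul, abs_of_nonneg hc, abs_of_nonneg (by positivity : (0:ℝ) ≤ σ⁻¹ ^ k)]
  simp_rw [h1]
  rw [MeasureTheory.integral_const_mul, MeasureTheory.Measure.integral_comp_div (fun u => |Pher k u|) σ,
    abs_of_pos hσ, smul_eq_mul]
  ring

lemma measurable_finDiff {f : ℝ → ℝ} (hf : Measurable f) (H : ℝ) (k : ℕ) :
    Measurable (fun x => finDiff H k f x) := by
  unfold finDiff
  exact Finset.measurable_sum _ fun j _ =>
    (hf.comp (measurable_id.add_const _)).const_mul _

lemma continuous_finDiff {f : ℝ → ℝ} (hf : Continuous f) (H : ℝ) (k : ℕ) :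
    Continuous (fun x => finDiff H k f x) := by
  unfold finDiff
  exact continuous_finset_sum _ fun j _ =>
    (continuous_const.mul (hf.comp (continuous_id.add continuous_const)))

lemma integrable_finDiff {f : ℝ → ℝ} (hf : Integrable f volume) (H : ℝ) (k : ℕ) :
    Integrable (fun x => finDiff H k f x) volume := by
  unfold finDiff
  exact integrable_finset_sum _ fun j _ => ((hf.comp_add_right _).const_mul _)

lemma hasDerivAt_finDiff {f f' : ℝ → ℝ} (hd : ∀ x, HasDerivAt f (f' x) x) (H : ℝ) (k : ℕ)
    (x : ℝ) : HasDerivAt (fun y => finDiff H k f y) (finDiff H k f' x) x := by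
  unfold finDiff
  refine HasDerivAt.fun_sum fun j _ => ?_
  have h1 : HasDerivAt (fun y : ℝ => f (y + (j : ℝ) * H)) (f' (x + (j : ℝ) * H)) x := by
    have := (hd (x + (j : ℝ) * H)).comp x ((hasDerivAt_id x).add_const ((j : ℝ) * H))
    exact this.congr_deriv (mul_one _)
  simpa using h1.const_mul ((-1 : ℝ) ^ (k - j) * (k.choose j : ℝ))

lemma L1_finDiff_Qg_bound {c σ : ℝ} (hσ : 0 < σ) (H : ℝ) :
    ∀ k j, ∫ x, |finDiff H k (Qg c σ j) x| ≤ |H| ^ k * ∫ x, |Qg c σ (j + k) x| := by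
  intro k
  induction k with
  | zero =>
      intro j
      simp only [pow_zero, one_mul, add_zero]
      refine le_of_eq ?_
      congr 1; funext x; rw [finDiff_zero]
  | succ k ih =>
      intro j
      have step1 : ∫ x, |finDiff H (k+1) (Qg c σ j) x|
          = ∫ x, |(fun y => finDiff H k (Qg c σ j) y) (x + H)
              - (fun y => finDiff H k (Qg c σ j) y) x| := by
        congr 1; funext x; rw [finDiff_succ]
      have step2 : ∫ x, |(fun y => finDiff H k (Qg c σ j) y) (x + H)
          - (fun y => finDiff H k (Qg c σ j) y) x|
          ≤ |H| * ∫ x, |finDiff H k (Qg c σ (j+1)) x| := by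
        refine integral_shift_abs_le ?_ ?_ ?_ ?_ H
        · exact fun x => hasDerivAt_finDiff (fun y => hasDerivAt_Qg c hσ j y) H k x
        · exact continuous_finDiff (continuous_Qg c σ (j+1)) H k
        · exact integrable_finDiff (integrable_Qg c hσ (j+1)) H k
        · exact integrable_finDiff (integrable_Qg c hσ j) H k
      calc ∫ x, |finDiff H (k+1) (Qg c σ j) x|
          ≤ |H| * ∫ x, |finDiff H k (Qg c σ (j+1)) x| := by rw [step1]; exact step2
        _ ≤ |H| * (|H| ^ k * ∫ x, |Qg c σ (j+1+k) x|) := by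
            refine mul_le_mul_of_nonneg_left (ih (j+1)) (abs_nonneg H)
        _ = |H| ^ (k+1) * ∫ x, |Qg c σ (j+(k+1)) x| := by
            rw [show j+1+k = j+(k+1) by ring, pow_succ]; ring

lemma gaussianPDFReal_eq_Qg {v : NNReal} (hv : 0 < v) :
    gaussianPDFReal 0 v = Qg (Real.sqrt (2 * π * v))⁻¹ (Real.sqrt v) 0 := by
  funext x
  have hvpos : (0:ℝ) < v := hv
  rw [gaussianPDFReal, Qg, Pher]
  simp only [pow_zero, Polynomial.hermite_zero, map_one, one_mul, mul_one, sub_zero]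
  congr 1
  rw [div_pow, sq_sqrt hvpos.le]
  field_simp

lemma bounded_integrable {α : Type*} [MeasurableSpace α] {ψ : α → ℝ} (hψ : Measurable ψ)
    {M : ℝ} (hM : ∀ x, |ψ x| ≤ M) (ν : Measure α) [IsProbabilityMeasure ν] : Integrable ψ ν :=
  Integrable.mono' (integrable_const M) hψ.aestronglyMeasurable (ae_of_all _ hM)



lemma integral_gaussianReal_density {v : NNReal} (hv : v ≠ 0) (g : ℝ → ℝ) :
    ∫ n, g n ∂(gaussianReal 0 v) = ∫ u, g u * gaussianPDFReal 0 v u := by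
  rw [gaussianReal_of_var_ne_zero 0 hv]
  have hd : gaussianPDF 0 v = fun x => ((gaussianPDFReal 0 v x).toNNReal : ℝ≥0∞) := rfl
  rw [hd, integral_withDensity_eq_integral_smul
    ((measurable_gaussianPDFReal 0 v).real_toNNReal) g]
  congr 1; funext u
  rw [NNReal.smul_def, smul_eq_mul, Real.coe_toNNReal _ (gaussianPDFReal_nonneg 0 v u), mul_comm]

lemma inner_bound {v : NNReal} (hv : 0 < v) {φ : ℝ → ℝ} (hφ : Measurable φ) {M : ℝ}
    (hM : ∀ x, |φ x| ≤ M) (h : ℝ) (m : ℕ) (z : ℝ) :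
    |∫ n, finDiff h m φ (z + n) ∂(gaussianReal 0 v)|
      ≤ M * ∫ u, |finDiff (-h) m (gaussianPDFReal 0 v) u| := by
  set γ := gaussianReal 0 v with hγ
  set p := gaussianPDFReal 0 v with hp
  have hv' : v ≠ 0 := hv.ne'
  have hpi : Integrable p volume := integrable_gaussianPDFReal 0 v
  have hpm : Measurable p := measurable_gaussianPDFReal 0 v
  have hM0 : 0 ≤ M := le_trans (abs_nonneg _) (hM 0)
  -- each translate of φ is integrable w.r.t. γ
  have hint : ∀ a : ℝ, Integrable (fun n => φ (z + n + a)) γ := by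
    intro a
    exact bounded_integrable (hφ.comp ((measurable_id.const_add z).add_const a))
      (fun x => hM _) γ
  -- step a: expand the finite difference
  have stepa : ∫ n, finDiff h m φ (z + n) ∂γ
      = ∑ j ∈ Finset.range (m + 1), (-1 : ℝ) ^ (m - j) * (m.choose j : ℝ)
          * ∫ n, φ (z + n + (j : ℝ) * h) ∂γ := by
    simp_rw [finDiff]
    rw [integral_finset_sum]
    · refine Finset.sum_congr rfl fun j _ => ?_
      rw [MeasureTheory.integral_const_mul]
    · exact fun j _ => ((hint ((j:ℝ) * h)).const_mul _)
  -- step b: each term as a Lebesgue integral against a shifted density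
  have stepb : ∀ j : ℕ, ∫ n, φ (z + n + (j : ℝ) * h) ∂γ
      = ∫ u, φ (z + u) * p (u - (j : ℝ) * h) := by
    intro j
    rw [integral_gaussianReal_density hv' (fun n => φ (z + n + (j : ℝ) * h))]
    have hGeq : (fun u => φ (z + u + (j:ℝ)*h) * p u)
        = fun u => (fun w => φ (z + w) * p (w - (j:ℝ)*h)) (u + (j:ℝ)*h) := by
      funext u
      show φ (z + u + (j:ℝ)*h) * p u = φ (z + (u + (j:ℝ)*h)) * p (u + (j:ℝ)*h - (j:ℝ)*h)
      rw [add_sub_cancel_right, ← add_assoc]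
    rw [hGeq, integral_add_right_eq_self (fun w => φ (z + w) * p (w - (j:ℝ)*h)) ((j:ℝ)*h)]
  -- integrability of products
  have hprod : ∀ a : ℝ, Integrable (fun u => φ (z + u) * p (u - a)) volume := by
    intro a
    refine Integrable.bdd_mul ((hpi.comp_sub_right a)) ?_ (c := M) (ae_of_all _ fun u => ?_)
    · exact (hφ.comp (measurable_id.const_add z)).aestronglyMeasurable
    · exact hM _
  -- step c: collapse the sum into a single integral
  have stepc : ∑ j ∈ Finset.range (m + 1), (-1 : ℝ) ^ (m - j) * (m.choose j : ℝ)
        * ∫ u, φ (z + u) * p (u - (j : ℝ) * h)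
      = ∫ u, φ (z + u) * finDiff (-h) m p u := by
    have : ∀ j ∈ Finset.range (m + 1), (-1 : ℝ) ^ (m - j) * (m.choose j : ℝ)
        * ∫ u, φ (z + u) * p (u - (j : ℝ) * h)
        = ∫ u, (-1 : ℝ) ^ (m - j) * (m.choose j : ℝ) * (φ (z + u) * p (u - (j : ℝ) * h)) := by
      intro j _
      rw [MeasureTheory.integral_const_mul]
    rw [Finset.sum_congr rfl this, ← integral_finset_sum]
    · congr 1; funext u
      rw [finDiff, Finset.mul_sum]
      refine Finset.sum_congr rfl fun j _ => ?_
      rw [mul_neg, ← sub_eq_add_neg]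
      ring
    · exact fun j _ => (hprod _).const_mul _
  rw [stepa]
  simp_rw [stepb]
  rw [stepc]
  -- final bound
  have hfd_int : Integrable (fun u => finDiff (-h) m p u) volume := by
    unfold finDiff
    exact integrable_finset_sum _ fun j _ => ((hpi.comp_add_right _).const_mul _)
  calc |∫ u, φ (z + u) * finDiff (-h) m p u|
      ≤ ∫ u, |φ (z + u) * finDiff (-h) m p u| := by
        have := norm_integral_le_integral_norm (fun u => φ (z + u) * finDiff (-h) m p u)
          (μ := volume)
        simpa only [Real.norm_eq_abs] using this
    _ ≤ ∫ u, M * |finDiff (-h) m p u| := by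
        refine integral_mono ?_ (hfd_int.abs.const_mul M) fun u => ?_
        · have : Integrable (fun u => φ (z + u) * finDiff (-h) m p u) volume := by
            refine Integrable.bdd_mul hfd_int
              (hφ.comp (measurable_id.const_add z)).aestronglyMeasurable (c := M) (ae_of_all _ fun u => hM _)
          exact this.abs
        · rw [abs_mul]
          exact mul_le_mul_of_nonneg_right (hM _) (abs_nonneg _)
    _ = M * ∫ u, |finDiff (-h) m p u| := by rw [MeasureTheory.integral_const_mul]

lemma abs_finDiff_le {φ : ℝ → ℝ} {M : ℝ} (hM : ∀ x, |φ x| ≤ M) (h : ℝ) (m : ℕ) (x : ℝ) :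
    |finDiff h m φ x| ≤ 2 ^ m * M := by
  have hM0 : 0 ≤ M := (abs_nonneg _).trans (hM 0)
  calc |finDiff h m φ x|
      ≤ ∑ j ∈ Finset.range (m + 1),
          |(-1 : ℝ) ^ (m - j) * (m.choose j : ℝ) * φ (x + (j : ℝ) * h)| :=
        Finset.abs_sum_le_sum_abs _ _
    _ ≤ ∑ j ∈ Finset.range (m + 1), (m.choose j : ℝ) * M := by
        refine Finset.sum_le_sum fun j _ => ?_
        rw [abs_mul, abs_mul, abs_pow, abs_neg, abs_one, one_pow, one_mul,
          Nat.abs_cast]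
        exact mul_le_mul_of_nonneg_left (hM _) (Nat.cast_nonneg _)
    _ = 2 ^ m * M := by
        rw [← Finset.sum_mul]
        congr 1
        rw [← Nat.cast_sum, Nat.sum_range_choose]
        push_cast
        ring


end FDEaux

open FDEaux

/-- For every integer `m ≥ 1` there is a constant `C_m > 0` such that: if `Z` and `N` are
independent real random variables, `N` is centered Gaussian with variance `v > 0`,
`φ : ℝ → ℝ` is bounded (by `M`) and measurable and `h ∈ ℝ`, then
`|E[(Δ_h^m φ)(Z + N)]| ≤ C_m (sup|φ|) (|h|/√v)^m`. -/
theorem finite_difference_estimate_of_gaussian_perturbation (m : ℕ) (hm : 1 ≤ m) :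
    ∃ C : ℝ, 0 < C ∧
      ∀ (Ω : Type) [MeasurableSpace Ω] (μ : Measure Ω) [IsProbabilityMeasure μ]
        (Z N : Ω → ℝ), Measurable Z → Measurable N → IndepFun Z N μ →
        ∀ v : NNReal, 0 < v → μ.map N = gaussianReal 0 v →
        ∀ φ : ℝ → ℝ, Measurable φ → ∀ M : ℝ, (∀ x, |φ x| ≤ M) →
        ∀ h : ℝ,
          |∫ ω, finDiff h m φ (Z ω + N ω) ∂μ| ≤
            C * M * (|h| / Real.sqrt (v : ℝ)) ^ m := by
  classical
  set A : ℝ := ∫ u, |Pher m u| with hA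
  have hA0 : 0 ≤ A := integral_nonneg fun u => abs_nonneg _
  refine ⟨(Real.sqrt (2 * π))⁻¹ * A + 1, by positivity, ?_⟩
  intro Ω _ μ _ Z N hZ hN hindep v hv hNlaw φ hφ M hM h
  have hσ : 0 < Real.sqrt (v : ℝ) := Real.sqrt_pos.mpr hv
  set σ : ℝ := Real.sqrt (v : ℝ) with hσdef
  have hM0 : 0 ≤ M := (abs_nonneg _).trans (hM 0)
  set γ : Measure ℝ := gaussianReal 0 v with hγ
  set ρ : Measure ℝ := μ.map Z with hρ
  haveI : IsProbabilityMeasure ρ := Measure.isProbabilityMeasure_map hZ.aemeasurable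
  have hFmeas : Measurable (fun x => finDiff h m φ x) := measurable_finDiff hφ h m
  -- expectation as double integral
  have hmap : μ.map (fun ω => (Z ω, N ω)) = ρ.prod γ := by
    rw [← hNlaw, hρ]
    exact (indepFun_iff_map_prod_eq_prod_map_map hZ.aemeasurable hN.aemeasurable).mp hindep
  have hEq1 : ∫ ω, finDiff h m φ (Z ω + N ω) ∂μ
      = ∫ q : ℝ × ℝ, finDiff h m φ (q.1 + q.2) ∂(ρ.prod γ) := by
    rw [← hmap]
    exact (integral_map ((hZ.prodMk hN).aemeasurable)
      ((hFmeas.comp measurable_add).aestronglyMeasurable)).symm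
  have hFint : Integrable (fun q : ℝ × ℝ => finDiff h m φ (q.1 + q.2)) (ρ.prod γ) :=
    bounded_integrable (hFmeas.comp measurable_add)
      (fun q => abs_finDiff_le hM h m _) _
  have hEq2 : ∫ q : ℝ × ℝ, finDiff h m φ (q.1 + q.2) ∂(ρ.prod γ)
      = ∫ z, ∫ n, finDiff h m φ (z + n) ∂γ ∂ρ := integral_prod _ hFint
  -- L¹ bound on the finite difference of the density
  set c0 : ℝ := (Real.sqrt (2 * π * v))⁻¹ with hc0def
  have hc0 : 0 ≤ c0 := by positivity
  have hL1 : ∫ u, |finDiff (-h) m (gaussianPDFReal 0 v) u|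
      ≤ |h| ^ m * (c0 * σ⁻¹ ^ m * σ * A) := by
    rw [gaussianPDFReal_eq_Qg hv]
    have hb := L1_finDiff_Qg_bound (c := c0) hσ (-h) m 0
    rw [abs_neg, zero_add, integral_abs_Qg hc0 hσ m] at hb
    exact hb
  -- constant simplification
  have hconst : c0 * σ⁻¹ ^ m * σ = (Real.sqrt (2 * π))⁻¹ * σ⁻¹ ^ m := by
    have hsplit : Real.sqrt (2 * π * v) = Real.sqrt (2 * π) * σ := by
      rw [hσdef, ← Real.sqrt_mul (by positivity)]
    rw [hc0def, hsplit, mul_inv]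
    field_simp
  -- put everything together
  have hbound : ∀ z : ℝ, |∫ n, finDiff h m φ (z + n) ∂γ|
      ≤ (Real.sqrt (2 * π))⁻¹ * A * M * (|h| / σ) ^ m := by
    intro z
    refine (inner_bound hv hφ hM h m z).trans ?_
    calc M * ∫ u, |finDiff (-h) m (gaussianPDFReal 0 v) u|
        ≤ M * (|h| ^ m * (c0 * σ⁻¹ ^ m * σ * A)) :=
          mul_le_mul_of_nonneg_left hL1 hM0
      _ = (Real.sqrt (2 * π))⁻¹ * A * M * (|h| / σ) ^ m := by
          rw [mul_comm (|h| ^ m), mul_assoc, hconst, div_pow, div_eq_mul_inv (|h| ^ m),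
            ← inv_pow]
          ring
  have hmain : |∫ ω, finDiff h m φ (Z ω + N ω) ∂μ|
      ≤ (Real.sqrt (2 * π))⁻¹ * A * M * (|h| / σ) ^ m := by
    rw [hEq1, hEq2]
    have := norm_integral_le_of_norm_le_const (μ := ρ)
      (f := fun z => ∫ n, finDiff h m φ (z + n) ∂γ)
      (C := (Real.sqrt (2 * π))⁻¹ * A * M * (|h| / σ) ^ m)
      (ae_of_all _ fun z => by simpa [Real.norm_eq_abs] using hbound z)
    simpa [Real.norm_eq_abs, measure_univ] using this
  refine hmain.trans ?_
  have hnn : 0 ≤ M * (|h| / σ) ^ m := by positivity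
  nlinarith [mul_le_mul_of_nonneg_right
    (le_add_of_nonneg_right (zero_le_one (α := ℝ)) :
      (Real.sqrt (2 * π))⁻¹ * A ≤ (Real.sqrt (2 * π))⁻¹ * A + 1) hnn]
end
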